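/- arXiv:2301.01613 — 6 statements merged into one kernel-verified Lean document; each statement's English description precedes it below -/
import Mathlib

section
/- Let N ⊆ Δ̂⁺ be a finite set of positive affine roots. For every Weyl chamber 𝔠 there is exactly one sign vector ε : N → {±1} such that C_ε has nonempty interior and the recession cone of C_ε contains 𝔠; namely, ε(α) is the (constant) sign of ⟨β_α, x⟩ for x ∈ 𝔠, for each α = (β_α, n_α) ∈ N. -/
open scoped RealInnerProductSpace

/-- A finite irreducible crystallographic root system in a real inner product space,
with a chosen positive system, simple roots, and highest root. -/
structure RootSystemData (V : Type*) [NormedAddCommGroup V] [InnerProductSpace ℝ V] where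
  Φ : Finset V
  pos : Finset V
  simples : Finset V
  θ : V
  nonzero : ∀ β ∈ Φ, β ≠ 0
  span_eq_top : Submodule.span ℝ (Φ : Set V) = ⊤
  neg_mem : ∀ β ∈ Φ, -β ∈ Φ
  pos_subset : pos ⊆ Φ
  pos_or_neg : ∀ β ∈ Φ, β ∈ pos ∨ -β ∈ pos
  not_pos_neg : ∀ β ∈ Φ, ¬(β ∈ pos ∧ -β ∈ pos)
  simples_subset : simples ⊆ pos
  pos_nat_combo : ∀ β ∈ pos, ∃ c : V → ℕ, β = ∑ γ ∈ simples, (c γ : ℝ) • γ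
  crystallographic : ∀ β ∈ Φ, ∀ γ ∈ Φ, ∃ m : ℤ, 2 * ⟪β, γ⟫ = (m : ℝ) * ⟪β, β⟫
  refl_mem : ∀ β ∈ Φ, ∀ γ ∈ Φ, γ - (2 * ⟪β, γ⟫ / ⟪β, β⟫) • β ∈ Φ
  irreducible : ∀ s : Finset V, s ⊆ Φ →
    (∀ β ∈ s, ∀ γ ∈ Φ, γ ∉ s → ⟪β, γ⟫ = 0) → s = ∅ ∨ s = Φ
  theta_mem : θ ∈ pos
  theta_highest : ∀ β ∈ Φ, ∃ c : V → ℝ, (∀ γ, 0 ≤ c γ) ∧ θ - β = ∑ γ ∈ simples, c γ • γ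

variable {V : Type*} [NormedAddCommGroup V] [InnerProductSpace ℝ V]

/-- Evaluation of the affine root `(β, n)` at the point `x`:  `⟪β, x⟫ + n`. -/
def aeval (α : V × ℤ) (x : V) : ℝ := ⟪α.1, x⟫ + (α.2 : ℝ)

/-- The orthogonal affine reflection in the hyperplane `H_{(β,n)} = {x | ⟪β,x⟫ + n = 0}`. -/
noncomputable def affRefl (β : V) (n : ℤ) : Equiv.Perm V :=
  Function.Involutive.toPerm
    (fun x => x - ((2 * (⟪β, x⟫ + (n : ℝ))) / ⟪β, β⟫) • β)
    (by
      intro x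
      by_cases hβ : β = 0
      · simp [hβ]
      · have hb : ⟪β, β⟫ ≠ 0 := by
          simpa using (inner_self_ne_zero (𝕜 := ℝ) (x := β)).mpr hβ
        have h1 : ⟪β, x - ((2 * (⟪β, x⟫ + (n : ℝ))) / ⟪β, β⟫) • β⟫
            = ⟪β, x⟫ - (2 * (⟪β, x⟫ + (n : ℝ))) := by
          rw [inner_sub_right, real_inner_smul_right]
          field_simp
        show (x - ((2 * (⟪β, x⟫ + (n : ℝ))) / ⟪β, β⟫) • β)
            - ((2 * (⟪β, x - ((2 * (⟪β, x⟫ + (n : ℝ))) / ⟪β, β⟫) • β⟫ + (n : ℝ)))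
                / ⟪β, β⟫) • β = x
        rw [h1]
        have h2 : (2 * ((⟪β, x⟫ - 2 * (⟪β, x⟫ + (n : ℝ))) + (n : ℝ))) / ⟪β, β⟫
            = -((2 * (⟪β, x⟫ + (n : ℝ))) / ⟪β, β⟫) := by
          field_simp
          ring
        rw [h2, neg_smul, sub_neg_eq_add, sub_add_cancel])

namespace RootSystemData

/-- The set of positive affine roots `Δ̂⁺`. -/
def posAff (R : RootSystemData V) : Set (V × ℤ) :=
  {α | α.1 ∈ R.Φ ∧ (0 < α.2 ∨ (α.2 = 0 ∧ α.1 ∈ R.pos))}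

/-- The affine Weyl group, generated by all reflections in affine root hyperplanes. -/
def weylGroup (R : RootSystemData V) : Subgroup (Equiv.Perm V) :=
  Subgroup.closure {g | ∃ β ∈ R.Φ, ∃ n : ℤ, g = affRefl β n}

/-- The fundamental alcove. -/
def fundAlcove (R : RootSystemData V) : Set V :=
  {x | (∀ β ∈ R.simples, 0 < ⟪β, x⟫) ∧ ⟪R.θ, x⟫ < 1}

/-- Simple affine reflections: reflections in the walls of the fundamental alcove. -/
def simpleAffRefls (R : RootSystemData V) : Set (Equiv.Perm V) :=
  {g | (∃ β ∈ R.simples, g = affRefl β 0) ∨ g = affRefl (-R.θ) 1}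

/-- Simple affine roots: the positive affine roots whose hyperplanes are the walls of the
fundamental alcove. -/
def simpleAffRoots (R : RootSystemData V) : Set (V × ℤ) :=
  {α | (α.2 = 0 ∧ α.1 ∈ R.simples) ∨ α = (-R.θ, 1)}

/-- `α` lies in `w · Δ̂⁺`, i.e. the function `x ↦ α (w x)` is (the evaluation of) a positive
affine root. -/
def memWPos (R : RootSystemData V) (w : Equiv.Perm V) (α : V × ℤ) : Prop :=
  ∃ γ ∈ R.posAff, ∀ x, aeval α (w x) = aeval γ x

end RootSystemData

/-- Two regions lie in the same Scopes chamber for `N`: every `α ∈ N` takes the same sign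
on both. -/
def SameScopes (N : Set (V × ℤ)) (C C' : Set V) : Prop :=
  ∀ α ∈ N, ∀ x ∈ C, ∀ y ∈ C', (0 < aeval α x ↔ 0 < aeval α y)

/-- The recession cone of a subset of `V`. -/
def recessionCone (C : Set V) : Set V :=
  {h | ∀ x ∈ C, ∀ t : ℝ, 0 ≤ t → x + t • h ∈ C}

/-- The (closed) chamber `C_ε` cut out by a sign vector `ε` on `N`. -/
def signedChamber (N : Set (V × ℤ)) (ε : N → ℝ) : Set V :=
  {x | ∀ α : N, 0 ≤ ε α * aeval (α : V × ℤ) x}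

/-- A Weyl chamber: a connected component of the complement of the linear hyperplanes
`⟪β, ·⟫ = 0` for `β ∈ Φ`. -/
def IsWeylChamber (R : RootSystemData V) (c : Set V) : Prop :=
  ∃ x, (∀ β ∈ R.Φ, ⟪β, x⟫ ≠ 0) ∧
    c = connectedComponentIn {y | ∀ β ∈ R.Φ, ⟪β, y⟫ ≠ 0} x

/-!
Each root `β` has constant nonzero sign on a Weyl chamber `𝔠` (the chamber is connected and
avoids `β = 0`). For nonempty `C_ε`, a direction `h` lies in the recession cone exactly when
every defining affine function is nondecreasing along `h`, i.e. `0 ≤ ε(α) ⟪β_α, h⟫`; on the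
chamber this inequality is strict, which forces `ε(α) = sign ⟪β_α, x⟫`. Conversely, for this
`ε`, the point `t x` lies in the open set where all the (finitely many) inequalities are strict
once `t` is large, so `C_ε` has nonempty interior.
-/

open Filter

theorem Real.eq_sign_of_mul_pos {ε r : ℝ} (hε : ε = 1 ∨ ε = -1) (h : 0 < ε * r) :
    ε = Real.sign r := by
  rcases hε with rfl | rfl
  · rw [Real.sign_of_pos (by linarith)]
  · rw [Real.sign_of_neg (by linarith)]

theorem nonneg_of_forall_nonneg_add_mul {a b : ℝ} (h : ∀ t : ℝ, 0 ≤ t → 0 ≤ b + t * a) :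
    0 ≤ a := by
  by_contra! ha
  have hb : 0 ≤ b := by simpa using h 0 le_rfl
  have ht := h ((b + 1) / -a) (div_nonneg (by linarith) (by linarith))
  have hta : (b + 1) / -a * a = -(b + 1) := by field_simp [ha.ne]
  linarith

theorem IsPreconnected.sign_eq_of_forall_ne_zero {X : Type*} [TopologicalSpace X] {s : Set X}
    (hs : IsPreconnected s) {f : X → ℝ} (hf : ContinuousOn f s) (hf0 : ∀ x ∈ s, f x ≠ 0)
    {x y : X} (hx : x ∈ s) (hy : y ∈ s) : Real.sign (f x) = Real.sign (f y) := by
  have no_crossing : ∀ a ∈ s, ∀ b ∈ s, f a < 0 → ¬0 < f b := fun a ha b hb hna hpb =>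
    let ⟨z, hz, hz0⟩ := hs.intermediate_value ha hb hf ⟨hna.le, hpb.le⟩
    hf0 z hz hz0
  rcases (hf0 x hx).lt_or_gt with hxneg | hxpos
  · rw [Real.sign_of_neg hxneg,
      Real.sign_of_neg ((hf0 y hy).lt_or_gt.resolve_right (no_crossing x hx y hy hxneg))]
  · rw [Real.sign_of_pos hxpos,
      Real.sign_of_pos ((hf0 y hy).lt_or_gt.resolve_left fun h => no_crossing y hy x hx h hxpos)]

theorem aeval_add_smul (α : V × ℤ) (x h : V) (t : ℝ) :
    aeval α (x + t • h) = aeval α x + t * ⟪α.1, h⟫ := by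
  simp only [aeval, inner_add_right, real_inner_smul_right]
  ring

section signedChamber

variable {N : Set (V × ℤ)} {ε : N → ℝ}

theorem mem_recessionCone_signedChamber {h : V}
    (hh : ∀ α : N, 0 ≤ ε α * ⟪(α : V × ℤ).1, h⟫) : h ∈ recessionCone (signedChamber N ε) := by
  intro x hx t ht α
  rw [aeval_add_smul, mul_add, mul_left_comm]
  exact add_nonneg (hx α) (mul_nonneg ht (hh α))

theorem mul_inner_nonneg_of_mem_recessionCone (hne : (signedChamber N ε).Nonempty) {h : V}
    (hh : h ∈ recessionCone (signedChamber N ε)) (α : N) :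
    0 ≤ ε α * ⟪(α : V × ℤ).1, h⟫ := by
  obtain ⟨y, hy⟩ := hne
  refine nonneg_of_forall_nonneg_add_mul (b := ε α * aeval (α : V × ℤ) y) fun t ht => ?_
  have := hh y hy t ht α
  rwa [aeval_add_smul, mul_add, mul_left_comm] at this

theorem isOpen_setOf_forall_mul_aeval_pos (hN : N.Finite) :
    IsOpen {x : V | ∀ α : N, 0 < ε α * aeval (α : V × ℤ) x} := by
  have : Finite N := hN
  simp only [Set.ofPred_forall]
  refine isOpen_iInter_of_finite fun α => isOpen_lt continuous_const ?_
  unfold aeval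
  fun_prop

theorem eventually_mul_aeval_smul_pos {α : V × ℤ} {e : ℝ} {x : V} (hx : 0 < e * ⟪α.1, x⟫) :
    ∀ᶠ t : ℝ in atTop, 0 < e * aeval α (t • x) := by
  have hlin : (fun t : ℝ => e * aeval α (t • x)) = fun t => t * (e * ⟪α.1, x⟫) + e * α.2 := by
    ext t
    simp only [aeval, real_inner_smul_right]
    ring
  have : Tendsto (fun t : ℝ => e * aeval α (t • x)) atTop atTop := by
    rw [hlin]
    exact tendsto_atTop_add_const_right _ _ (tendsto_id.atTop_mul_const hx)
  exact this.eventually_gt_atTop 0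

theorem interior_signedChamber_nonempty (hN : N.Finite) {x : V}
    (hx : ∀ α : N, 0 < ε α * ⟪(α : V × ℤ).1, x⟫) : (interior (signedChamber N ε)).Nonempty := by
  have : Finite N := hN
  obtain ⟨t, ht⟩ := (eventually_all.mpr fun α => eventually_mul_aeval_smul_pos (hx α)).exists
  exact ⟨t • x, interior_maximal (fun y hy α => (hy α).le)
    (isOpen_setOf_forall_mul_aeval_pos hN) ht⟩

end signedChamber

namespace IsWeylChamber

variable {R : RootSystemData V} {c : Set V} {β x y : V}

theorem nonempty (hc : IsWeylChamber R c) : c.Nonempty := by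
  obtain ⟨x, hx, rfl⟩ := hc
  exact ⟨x, mem_connectedComponentIn hx⟩

theorem inner_ne_zero (hc : IsWeylChamber R c) (hβ : β ∈ R.Φ) (hx : x ∈ c) : ⟪β, x⟫ ≠ 0 := by
  obtain ⟨x₀, -, rfl⟩ := hc
  exact connectedComponentIn_subset _ x₀ hx β hβ

theorem sign_inner_eq (hc : IsWeylChamber R c) (hβ : β ∈ R.Φ) (hx : x ∈ c) (hy : y ∈ c) :
    Real.sign ⟪β, x⟫ = Real.sign ⟪β, y⟫ := by
  have hconn : IsPreconnected c := by
    obtain ⟨x₀, -, rfl⟩ := hc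
    exact isPreconnected_connectedComponentIn
  exact hconn.sign_eq_of_forall_ne_zero (continuous_const.inner continuous_id).continuousOn
    (fun z hz => hc.inner_ne_zero hβ hz) hx hy

theorem sign_mul_inner_pos (hc : IsWeylChamber R c) (hβ : β ∈ R.Φ) (hx : x ∈ c) (hy : y ∈ c) :
    0 < Real.sign ⟪β, x⟫ * ⟪β, y⟫ := by
  rw [hc.sign_inner_eq hβ hx hy]
  exact Real.sign_mul_pos_of_ne_zero _ (hc.inner_ne_zero hβ hy)

theorem mul_inner_pos_of_subset_recessionCone (hc : IsWeylChamber R c) {N : Set (V × ℤ)}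
    (hN : ∀ α ∈ N, α.1 ∈ R.Φ) {ε : N → ℝ} (hε : ∀ α, ε α ≠ 0)
    (hne : (signedChamber N ε).Nonempty) (hrec : c ⊆ recessionCone (signedChamber N ε))
    (α : N) (hx : x ∈ c) : 0 < ε α * ⟪(α : V × ℤ).1, x⟫ :=
  (mul_inner_nonneg_of_mem_recessionCone hne (hrec hx) α).lt_of_ne
    (mul_ne_zero (hε α) (hc.inner_ne_zero (hN α α.2) hx)).symm

end IsWeylChamber

theorem existsUnique_signedChamber_recession_supset_weylChamber_general
    (R : RootSystemData V) (N : Set (V × ℤ)) (hN : N ⊆ R.posAff) (hNfin : N.Finite)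
    (c : Set V) (hc : IsWeylChamber R c) :
    (∃! ε : N → ℝ, (∀ α, ε α = 1 ∨ ε α = -1) ∧
        (interior (signedChamber N ε)).Nonempty ∧
        c ⊆ recessionCone (signedChamber N ε)) ∧
    (∀ ε : N → ℝ, ((∀ α, ε α = 1 ∨ ε α = -1) ∧
        (interior (signedChamber N ε)).Nonempty ∧
        c ⊆ recessionCone (signedChamber N ε)) →
      ∀ α : N, ∀ x ∈ c, 0 < ε α * ⟪(α : V × ℤ).1, x⟫) := by
  have hΦ : ∀ α ∈ N, α.1 ∈ R.Φ := fun α hα => (hN hα).1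
  have signs : ∀ ε : N → ℝ, ((∀ α, ε α = 1 ∨ ε α = -1) ∧
      (interior (signedChamber N ε)).Nonempty ∧ c ⊆ recessionCone (signedChamber N ε)) →
      ∀ α : N, ∀ x ∈ c, 0 < ε α * ⟪(α : V × ℤ).1, x⟫ := by
    rintro ε ⟨hpm, hint, hrec⟩ α x hx
    refine hc.mul_inner_pos_of_subset_recessionCone hΦ (fun α => ?_)
      (hint.mono interior_subset) hrec α hx
    rcases hpm α with h | h <;> norm_num [h]
  obtain ⟨x₀, hx₀⟩ := hc.nonempty
  refine ⟨⟨fun α => Real.sign ⟪(α : V × ℤ).1, x₀⟫, ⟨fun α => ?_, ?_, ?_⟩,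
    fun ε hε => funext fun α => Real.eq_sign_of_mul_pos (hε.1 α) (signs ε hε α x₀ hx₀)⟩, signs⟩
  · exact (Real.sign_apply_eq_of_ne_zero _ (hc.inner_ne_zero (hΦ α α.2) hx₀)).symm
  · exact interior_signedChamber_nonempty hNfin fun α => hc.sign_mul_inner_pos (hΦ α α.2) hx₀ hx₀
  · exact fun h hh => mem_recessionCone_signedChamber fun α =>
      (hc.sign_mul_inner_pos (hΦ α α.2) hx₀ hh).le

/-- For every Weyl chamber `𝔠` there is exactly one sign vector `ε` such that
`C_ε` has nonempty interior and the recession cone of `C_ε` contains `𝔠`; namely, `ε(α)` is the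
(constant) sign of `⟪β_α, x⟫` for `x ∈ 𝔠`. -/
theorem existsUnique_signedChamber_recession_supset_weylChamber
    [FiniteDimensional ℝ V]
    (R : RootSystemData V) (N : Set (V × ℤ)) (hN : N ⊆ R.posAff) (hNfin : N.Finite)
    (c : Set V) (hc : IsWeylChamber R c) :
    (∃! ε : N → ℝ, (∀ α, ε α = 1 ∨ ε α = -1) ∧
        (interior (signedChamber N ε)).Nonempty ∧
        c ⊆ recessionCone (signedChamber N ε)) ∧
    (∀ ε : N → ℝ, ((∀ α, ε α = 1 ∨ ε α = -1) ∧
        (interior (signedChamber N ε)).Nonempty ∧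
        c ⊆ recessionCone (signedChamber N ε)) →
      ∀ α : N, ∀ x ∈ c, 0 < ε α * ⟪(α : V × ℤ).1, x⟫) :=
  existsUnique_signedChamber_recession_supset_weylChamber_general R N hN hNfin c hc
end

section
/- For a positive real root α_{ij;n} of ŝl_e, there exists a partition λ with Σ_{r=1}^e b_r(λ) α_r = α_{ij;n} if and only if n > 0. -/
namespace SleHat

/-- The standard basis vector `e_k` of `ℝ^{e+2}` (realized inside `ℕ → ℝ`). -/
def eVec (k : ℕ) : ℕ → ℝ := fun m => if m = k then 1 else 0

/-- The standard dot product on `ℝ^{e+2}`, pairing weights and coweights. -/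
def dot (e : ℕ) (x y : ℕ → ℝ) : ℝ := ∑ k ∈ Finset.range (e + 2), x k * y k

/-- The simple roots of `ŝl_e`: `α_i = e_i − e_{i+1}` for `1 ≤ i ≤ e−1` and
`α_e = −e_1 + e_e − e_{e+1}`. -/
def simpleRoot (e i : ℕ) : ℕ → ℝ :=
  if i = e then -eVec 1 + eVec e - eVec (e + 1) else eVec i - eVec (i + 1)

/-- The simple coroots of `ŝl_e`: `α_i^∨ = e_i − e_{i+1}` for `1 ≤ i ≤ e−1` and
`α_e^∨ = e_0 − e_1 + e_e`. -/
def simpleCoroot (e i : ℕ) : ℕ → ℝ :=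
  if i = e then eVec 0 - eVec 1 + eVec e else eVec i - eVec (i + 1)

/-- The null root `δ = −e_{e+1}`. -/
def nullRoot (e : ℕ) : ℕ → ℝ := -eVec (e + 1)

/-- `δ^∨ = e_0`. -/
def deltaVee : ℕ → ℝ := eVec 0

/-- The real roots `α_{ij;n} = e_i − e_j + nδ`. -/
def alphaIJ (e i j : ℕ) (n : ℤ) : ℕ → ℝ := eVec i - eVec j + (n : ℝ) • nullRoot e

/-- `α_{ij;n}` is a positive real root: `i ≠ j` in `{1,…,e}`, with `n ≥ 0` if `i < j` and
`n > 0` if `i > j`. -/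
def IsPosRoot (e i j : ℕ) (n : ℤ) : Prop :=
  1 ≤ i ∧ i ≤ e ∧ 1 ≤ j ∧ j ≤ e ∧ i ≠ j ∧ (i < j → 0 ≤ n) ∧ (j < i → 0 < n)

/-- `ν` is dominant: `α_i^∨ · ν ≥ 0` for all `i ∈ {1,…,e}`. -/
def Dominant (e : ℕ) (ν : ℕ → ℝ) : Prop :=
  ∀ i, 1 ≤ i → i ≤ e → 0 ≤ dot e (simpleCoroot e i) ν

/-- `ν ≤ Λ`: the difference `Λ − ν` is a `ℤ_{≥0}`-combination of the simple roots. -/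
def LeRoot (e : ℕ) (ν Λ : ℕ → ℝ) : Prop :=
  ∃ c : ℕ → ℕ, Λ - ν = ∑ i ∈ Finset.Icc 1 e, (c i : ℝ) • simpleRoot e i

/-- The simple reflection `s_i(ν) = ν − (α_i^∨ · ν)·α_i`. -/
def sAct (e i : ℕ) (ν : ℕ → ℝ) : ℕ → ℝ :=
  ν - dot e (simpleCoroot e i) ν • simpleRoot e i

/-- `ν ∈ supp(Λ)`, i.e. `wν ≤ Λ` for every element `w` of the Weyl group `W` generated by the
simple reflections `s_1, …, s_e` (each `s_i` is an involution, so the elements of `W` are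
exactly the products of the generators). -/
def InSupp (e : ℕ) (Λ ν : ℕ → ℝ) : Prop :=
  ∀ L : List ℕ, (∀ i ∈ L, 1 ≤ i ∧ i ≤ e) →
    LeRoot e (L.foldr (fun i x => sAct e i x) ν) Λ

/-- The statistic `k⁺_{ij}` attached to a weight `μ` (for the highest weight `Λ`):
`max({−1} ∪ {n : α_{ij;n} ∈ N_μ})` if `i < j` and `max({0} ∪ {n : α_{ij;n} ∈ N_μ})` if `i > j`,
where `N_μ` is the set of positive real roots `α` with `μ + α ∈ supp(Λ)`.
The statistic `k⁻_{ij}` is `k⁺_{ji}`. -/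
noncomputable def kplus (e : ℕ) (Λ μ : ℕ → ℝ) (i j : ℕ) : ℤ :=
  if i < j then
    sSup ({-1} ∪ {n : ℤ | 0 ≤ n ∧ InSupp e Λ (μ + alphaIJ e i j n)})
  else
    sSup ({0} ∪ {n : ℤ | 0 < n ∧ InSupp e Λ (μ + alphaIJ e i j n)})

/-- The orthogonal projection of `ℝ^{e+2}` onto the subspace
`𝔥* = {h : h_1 + ⋯ + h_e = 0}`. -/
noncomputable def proj (e : ℕ) (v : ℕ → ℝ) : ℕ → ℝ :=
  fun k => if 1 ≤ k ∧ k ≤ e then v k - (∑ r ∈ Finset.Icc 1 e, v r) / e else v k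

/-- The fundamental weight `Λ_i`: the orthogonal projection onto `𝔥*` of
`e_0 + e_1 + ⋯ + e_i`. -/
noncomputable def fundWt (e i : ℕ) : ℕ → ℝ := proj e (∑ k ∈ Finset.range (i + 1), eVec k)

/-- A partition, encoded by its (weakly decreasing, eventually zero) sequence of parts
`p 0 ≥ p 1 ≥ ⋯` (0-indexed rows). -/
def IsPartition (p : ℕ → ℕ) : Prop :=
  (∀ a b, a ≤ b → p b ≤ p a) ∧ ∃ M, ∀ k, M ≤ k → p k = 0

/-- `b_i(λ)`: the number of boxes of `λ` of residue `≡ i (mod e)`.  Boxes are pairs `(r, c)`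
(0-indexed) with `c < p r`; the box `(r, c)` has residue `c − r (mod e)`. -/
noncomputable def resCount (e : ℕ) (p : ℕ → ℕ) (i : ℕ) : ℕ :=
  Set.ncard {rc : ℕ × ℕ | rc.2 < p rc.1 ∧
    ((rc.2 : ℤ) - (rc.1 : ℤ)) % (e : ℤ) = (i : ℤ) % (e : ℤ)}

/-- The weight of a partition: `Λ_e − Σ_{i=1}^e b_i(λ) α_i`. -/
noncomputable def wtPartition (e : ℕ) (p : ℕ → ℕ) : ℕ → ℝ :=
  fundWt e e - ∑ i ∈ Finset.Icc 1 e, (resCount e p i : ℝ) • simpleRoot e i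

end SleHat

/-!
Only `α_e` involves the null root, so `∑ b_r(λ) α_r = α_{ij;n}` forces `b_e(λ) = n`; and
`b_e(λ) = 0` only for the empty partition, whose sum `0` is not a root.

Conversely, write `ρ(m) ∈ {1, …, e}` for the residue of an integer `m` (`resIdx`) and put
`φ(m) = e_{ρ(m)} − ⌊(m − 1)/e⌋ δ` (`contentWt`). Then `α_{ρ(m)} = φ(m) − φ(m + 1)`, so for a
partition whose boxes have the contents `a, a + 1, …, b − 1`, each once, the sum
`∑ b_r(λ) α_r` telescopes to `φ(a) − φ(b)`. The hook with arm `(n − 1)e + j` and leg `e − i` has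
contents `i − e, …, (n − 1)e + j − 1`, and `φ(i − e) − φ((n − 1)e + j) = e_i − e_j + nδ`.
-/

namespace SleHat

open Finset

/-- The residue of `m` modulo `e` as an index in `{1, …, e}`, residue `0` becoming `e`, as in
`resCount` and `simpleRoot`. -/
def resIdx (e : ℕ) (m : ℤ) : ℕ := ((m - 1) % e).toNat + 1

noncomputable def contentWt (e : ℕ) (m : ℤ) : ℕ → ℝ :=
  eVec (resIdx e m) - (((m - 1) / e : ℤ) : ℝ) • nullRoot e

section Residues

variable {e k : ℕ}

lemma mul_add_sub_one_ediv_emod (he : 0 < e) (hk : k ∈ Icc 1 e) (q : ℤ) :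
    (q * e + k - 1) / e = q ∧ (q * e + k - 1) % e = k - 1 := by
  rw [mem_Icc] at hk
  rw [Int.ediv_emod_unique (by exact_mod_cast he)]
  exact ⟨by ring, by omega, by omega⟩

lemma resIdx_mul_add (he : 0 < e) (hk : k ∈ Icc 1 e) (q : ℤ) : resIdx e (q * e + k) = k := by
  rw [resIdx, (mul_add_sub_one_ediv_emod he hk q).2]
  rw [mem_Icc] at hk
  omega

lemma contentWt_mul_add (he : 0 < e) (hk : k ∈ Icc 1 e) (q : ℤ) :
    contentWt e (q * e + k) = eVec k - (q : ℝ) • nullRoot e := by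
  rw [contentWt, resIdx_mul_add he hk, (mul_add_sub_one_ediv_emod he hk q).1]

lemma exists_eq_mul_add (he : 0 < e) (m : ℤ) : ∃ q : ℤ, ∃ k ∈ Icc 1 e, m = q * e + k := by
  have h0 := Int.emod_nonneg (m - 1) (by exact_mod_cast he.ne' : (e : ℤ) ≠ 0)
  have h1 := Int.emod_lt_of_pos (m - 1) (by exact_mod_cast he : (0 : ℤ) < e)
  have := Int.mul_ediv_add_emod (m - 1) e
  refine ⟨(m - 1) / e, ((m - 1) % e).toNat + 1, mem_Icc.2 ⟨by omega, by omega⟩, ?_⟩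
  push_cast
  rw [Int.toNat_of_nonneg h0]
  linarith

lemma resIdx_mem_Icc (he : 0 < e) (m : ℤ) : resIdx e m ∈ Icc 1 e := by
  obtain ⟨q, k, hk, rfl⟩ := exists_eq_mul_add he m
  rwa [resIdx_mul_add he hk]

lemma resIdx_eq_iff (he : 0 < e) (hk : k ∈ Icc 1 e) (m : ℤ) :
    resIdx e m = k ↔ m % e = k % e := by
  obtain ⟨q, l, hl, rfl⟩ := exists_eq_mul_add he m
  rw [resIdx_mul_add he hl, add_comm, Int.add_mul_emod_self_right]
  rw [mem_Icc] at hk hl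
  constructor
  · rintro rfl; rfl
  · intro h
    have h' : ((l : ℤ) - 1) % e = ((k : ℤ) - 1) % e := Int.ModEq.sub_right 1 h
    rw [Int.emod_eq_of_lt (by omega) (by omega), Int.emod_eq_of_lt (by omega) (by omega)] at h'
    omega

lemma simpleRoot_resIdx (he : 0 < e) (m : ℤ) :
    simpleRoot e (resIdx e m) = contentWt e m - contentWt e (m + 1) := by
  obtain ⟨q, k, hk, rfl⟩ := exists_eq_mul_add he m
  rw [resIdx_mul_add he hk, contentWt_mul_add he hk]
  rcases (mem_Icc.1 hk).2.lt_or_eq with hlt | hke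
  · have hk' : k + 1 ∈ Icc 1 e := mem_Icc.2 ⟨by omega, hlt⟩
    rw [add_assoc, ← Nat.cast_one (R := ℤ), ← Nat.cast_add, contentWt_mul_add he hk',
      simpleRoot, if_neg hlt.ne]
    abel
  · subst k
    rw [show q * e + e + 1 = (q + 1) * e + ((1 : ℕ) : ℤ) by push_cast; ring,
      contentWt_mul_add he (mem_Icc.2 ⟨le_rfl, he⟩), simpleRoot, if_pos rfl, nullRoot]
    push_cast
    module

end Residues

/-- The content `c - r` of the box in row `r` and column `c`. -/
def content (x : ℕ × ℕ) : ℤ := x.2 - x.1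

section Boxes

variable {M : Type*} [AddCommMonoid M] {e k : ℕ} {p : ℕ → ℕ} {s : Finset (ℕ × ℕ)}

lemma IsPartition.exists_finset_boxes (hp : IsPartition p) :
    ∃ s : Finset (ℕ × ℕ), ∀ x, x ∈ s ↔ x.2 < p x.1 := by
  obtain ⟨hmono, M, hM⟩ := hp
  refine ⟨{x ∈ range M ×ˢ range (p 0) | x.2 < p x.1}, fun x => ?_⟩
  simp only [mem_filter, mem_product, mem_range, and_iff_right_iff_imp]
  intro hx
  exact ⟨lt_of_not_ge fun h => by simp [hM _ h] at hx, hx.trans_le (hmono 0 _ (Nat.zero_le _))⟩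

lemma resCount_eq_card_filter (he : 0 < e) (hs : ∀ x, x ∈ s ↔ x.2 < p x.1) (hk : k ∈ Icc 1 e) :
    resCount e p k = #{x ∈ s | resIdx e (content x) = k} := by
  rw [resCount, ← Set.ncard_coe_finset]
  congr 1
  ext x
  simp [hs, resIdx_eq_iff he hk, content]

lemma sum_resCount_nsmul (he : 0 < e) (hs : ∀ x, x ∈ s ↔ x.2 < p x.1) (v : ℕ → M) :
    ∑ k ∈ Icc 1 e, resCount e p k • v k = ∑ x ∈ s, v (resIdx e (content x)) := by
  rw [← sum_fiberwise_of_maps_to (fun x _ => resIdx_mem_Icc he (content x))]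
  refine sum_congr rfl fun k hk => ?_
  rw [resCount_eq_card_filter he hs hk, ← sum_const]
  exact sum_congr rfl fun x hx => by rw [(mem_filter.1 hx).2]

/-- A nonempty partition has a box of residue `0`, namely its corner. -/
lemma IsPartition.eq_zero_of_resCount_eq_zero (hp : IsPartition p) (he : 0 < e)
    (h : resCount e p e = 0) : p = 0 := by
  obtain ⟨s, hs⟩ := hp.exists_finset_boxes
  rw [resCount_eq_card_filter he hs (mem_Icc.2 ⟨he, le_rfl⟩), card_eq_zero,
    filter_eq_empty_iff] at h
  have hcorner : (0, 0) ∉ s := fun h0 =>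
    h h0 (by simp [resIdx_eq_iff he (mem_Icc.2 ⟨he, le_rfl⟩), content])
  funext r
  have := hp.1 0 r (Nat.zero_le r)
  simp only [hs] at hcorner
  simp only [Pi.zero_apply]
  omega

lemma resCount_zero (e k : ℕ) : resCount e 0 k = 0 := by
  simp [resCount]

end Boxes

/-- The hook with arm `A` (its first row) and leg `L` (the rows of length one below it). -/
def hook (A L : ℕ) : ℕ → ℕ := fun r => if r = 0 then A else if r ≤ L then 1 else 0

/-- The boxes of a hook with leg `L`, enumerated from the bottom of the leg along the arm. -/
def hookBox (L k : ℕ) : ℕ × ℕ := if k < L then (L - k, 0) else (0, k - L)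

section Hook

variable {e A L : ℕ}

lemma isPartition_hook (hA : 1 ≤ A) : IsPartition (hook A L) := by
  refine ⟨fun a b hab => ?_, L + 1, fun r hr => ?_⟩ <;> unfold hook <;> split_ifs <;> omega

lemma content_hookBox (L k : ℕ) : content (hookBox L k) = k - L := by
  unfold hookBox content
  split_ifs <;> push_cast <;> omega

lemma mem_image_hookBox (x : ℕ × ℕ) :
    x ∈ (range (L + A)).image (hookBox L) ↔ x.2 < hook A L x.1 := by
  obtain ⟨r, c⟩ := x
  simp only [mem_image, mem_range, hookBox, hook]
  constructor
  · rintro ⟨k, hk, hbox⟩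
    split_ifs at hbox <;> simp only [Prod.mk.injEq] at hbox <;> split_ifs <;> omega
  · intro h
    split_ifs at h with hr hrL
    · exact ⟨c + L, by omega, by rw [if_neg (by omega)]; simp [hr]⟩
    · exact ⟨L - r, by omega, by rw [if_pos (by omega)]; simp only [Prod.mk.injEq]; omega⟩
    · omega

/-- The contents of the hook are `-L, …, A - 1`, each once, so the simple roots of its residues
telescope. -/
lemma sum_resCount_hook_smul_simpleRoot (he : 0 < e) :
    ∑ k ∈ Icc 1 e, (resCount e (hook A L) k : ℝ) • simpleRoot e k
      = contentWt e (-L) - contentWt e A := by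
  simp_rw [Nat.cast_smul_eq_nsmul ℝ]
  have hinj : Set.InjOn (hookBox L) (range (L + A)) := fun k _ l _ hkl => by
    have := congrArg content hkl
    rw [content_hookBox, content_hookBox] at this
    omega
  rw [sum_resCount_nsmul he mem_image_hookBox, sum_image hinj]
  simp_rw [content_hookBox, simpleRoot_resIdx he]
  have := sum_range_sub' (fun k : ℕ => contentWt e ((k : ℤ) - L)) (L + A)
  push_cast at this
  simpa [sub_add_eq_add_sub] using this

end Hook

section Coordinates

variable {e i j : ℕ}

lemma sum_smul_simpleRoot_apply_succ (he : 0 < e) (c : ℕ → ℝ) :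
    (∑ k ∈ Icc 1 e, c k • simpleRoot e k) (e + 1) = -c e := by
  rw [Finset.sum_apply, sum_eq_single_of_mem e (mem_Icc.2 ⟨he, le_rfl⟩)]
  · simp [simpleRoot, eVec, he.ne']
  · intro k hk hke
    rw [mem_Icc] at hk
    simp [simpleRoot, eVec, hke, show e + 1 ≠ k by omega, show e ≠ k by omega]

lemma alphaIJ_apply_succ (hi : i ≤ e) (hj : j ≤ e) (n : ℤ) : alphaIJ e i j n (e + 1) = -n := by
  simp [alphaIJ, eVec, nullRoot, show e + 1 ≠ i by omega, show e + 1 ≠ j by omega]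

lemma alphaIJ_apply_left (hij : i ≠ j) (hi : i ≤ e) (n : ℤ) : alphaIJ e i j n i = 1 := by
  simp [alphaIJ, eVec, nullRoot, hij, show i ≠ e + 1 by omega]

end Coordinates

theorem exists_partition_residues_eq_alphaIJ_general (e : ℕ)
    (i j : ℕ) (n : ℤ) (h : IsPosRoot e i j n) :
    (∃ p : ℕ → ℕ, IsPartition p ∧
        (∑ r ∈ Finset.Icc 1 e, (resCount e p r : ℝ) • simpleRoot e r) = alphaIJ e i j n) ↔
      0 < n := by
  obtain ⟨hi1, hie, hj1, hje, hij, -, -⟩ := h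
  have he : 0 < e := by omega
  constructor
  · rintro ⟨p, hp, hsum⟩
    have hcoord := congrFun hsum (e + 1)
    rw [sum_smul_simpleRoot_apply_succ he, alphaIJ_apply_succ hie hje, neg_inj] at hcoord
    have hn : (resCount e p e : ℤ) = n := by exact_mod_cast hcoord
    by_contra hn0
    have hp0 : p = 0 := hp.eq_zero_of_resCount_eq_zero he (by omega)
    have hcoord_i := congrFun hsum i
    simp [hp0, resCount_zero, alphaIJ_apply_left hij hie] at hcoord_i
  · intro hn
    obtain ⟨N, rfl⟩ := Int.eq_succ_of_zero_lt hn
    refine ⟨hook (N * e + j) (e - i), isPartition_hook (by omega), ?_⟩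
    rw [sum_resCount_hook_smul_simpleRoot he,
      show -((e - i : ℕ) : ℤ) = -1 * e + i by omega, Nat.cast_add, Nat.cast_mul,
      contentWt_mul_add he (mem_Icc.2 ⟨hi1, hie⟩), contentWt_mul_add he (mem_Icc.2 ⟨hj1, hje⟩),
      alphaIJ]
    push_cast
    module

/-- For a positive real root `α_{ij;n}` of `ŝl_e`, there is a partition `λ`
with `Σ_{r=1}^e b_r(λ) α_r = α_{ij;n}` if and only if `n > 0`. -/
theorem exists_partition_residues_eq_alphaIJ (e : ℕ) (he : 2 ≤ e)
    (i j : ℕ) (n : ℤ) (h : IsPosRoot e i j n) :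
    (∃ p : ℕ → ℕ, IsPartition p ∧
        (∑ r ∈ Finset.Icc 1 e, (resCount e p r : ℝ) • simpleRoot e r) = alphaIJ e i j n) ↔
      0 < n :=
  exists_partition_residues_eq_alphaIJ_general e i j n h

end SleHat
end

section
/- Take e = 2, Λ = w_1Λ_1 + w_2Λ_2 with w_1, w_2 ∈ ℤ_{≥0} and w_1 + w_2 ≥ 1, and μ = Λ − b_1α_1 − b_2α_2 with b_1, b_2 ∈ ℤ_{≥0}, (b_1,b_2) ≠ (0,0), and μ dominant. Set b_{12} = min(b_1 − 1, b_2) and b_{21} = min(b_1 + 1, b_2). Then: k⁺_{12} = b_{12} if w_2 > 0 or b_1 > b_2, and k⁺_{12} = b_{12} − 1 if w_2 = 0 and b_1 = b_2; k⁻_{12} = b_{21} if w_1 > 0 or b_2 > b_1, and k⁻_{12} = b_{21} − 1 if w_1 = 0 and b_1 = b_2. -/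
namespace SleHat

/-! For `e = 2` write weights as `Λ − aα₁ − bα₂` with `Λ = w₁Λ₁ + w₂Λ₂`, and let
`X = w₁ − 2a + 2b`, `Y = w₂ + 2a − 2b` be their pairings with `α₁^∨, α₂^∨`, so that
`X + Y = w₁ + w₂`. Up to one reflection `s₁`, the Weyl group orbit of such a weight consists of
the translates `(a, b) ↦ (a + m²X + m(m−1)Y, b + m(m+1)X + m²Y)`, `m ∈ ℤ`; hence a dominant
weight with `a, b ≥ 0` lies in `supp(Λ)`. Up to the claimed bound, `μ + α_{12;n}`
(resp. `μ + α_{21;n}`) becomes such a weight after at most two simple reflections; beyond it the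
coefficients of the weight itself are negative, or, when `b₁ = b₂` and `w₂ = 0` (resp. `w₁ = 0`),
those of its image under `s₂` (resp. `s₁`). -/

theorem InSupp.sAct {e : ℕ} {Λ ν : ℕ → ℝ} (h : InSupp e Λ ν) {i : ℕ} (hi : 1 ≤ i)
    (hie : i ≤ e) : InSupp e Λ (sAct e i ν) := by
  intro L hL
  have hLi : ∀ j ∈ L ++ [i], 1 ≤ j ∧ j ≤ e := by
    simp only [List.mem_append, List.mem_singleton]
    rintro j (hj | rfl)
    exacts [hL j hj, ⟨hi, hie⟩]
  simpa [List.foldr_append] using h (L ++ [i]) hLi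

theorem kplus_eq_of_lt {e : ℕ} {Λ μ : ℕ → ℝ} {i j : ℕ} {K : ℤ} (hij : i < j) (hK : -1 ≤ K)
    (h : ∀ n, 0 ≤ n → (InSupp e Λ (μ + alphaIJ e i j n) ↔ n ≤ K)) :
    kplus e Λ μ i j = K := by
  have hset : {-1} ∪ {n : ℤ | 0 ≤ n ∧ InSupp e Λ (μ + alphaIJ e i j n)} = Set.Icc (-1) K := by
    ext n
    simp only [Set.mem_union, Set.mem_singleton_iff, Set.mem_ofPred_eq, Set.mem_Icc]
    constructor
    · rintro (rfl | ⟨hn, hsupp⟩)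
      exacts [⟨le_rfl, hK⟩, ⟨by omega, (h n hn).1 hsupp⟩]
    · rintro ⟨hn, hnK⟩
      rcases eq_or_lt_of_le hn with rfl | hn
      exacts [Or.inl rfl, Or.inr ⟨by omega, (h n (by omega)).2 hnK⟩]
  rw [kplus, if_pos hij, hset, csSup_Icc hK]

theorem kplus_eq_of_gt {e : ℕ} {Λ μ : ℕ → ℝ} {i j : ℕ} {K : ℤ} (hji : j < i) (hK : 0 ≤ K)
    (h : ∀ n, 0 < n → (InSupp e Λ (μ + alphaIJ e i j n) ↔ n ≤ K)) :
    kplus e Λ μ i j = K := by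
  have hset : {0} ∪ {n : ℤ | 0 < n ∧ InSupp e Λ (μ + alphaIJ e i j n)} = Set.Icc 0 K := by
    ext n
    simp only [Set.mem_union, Set.mem_singleton_iff, Set.mem_ofPred_eq, Set.mem_Icc]
    constructor
    · rintro (rfl | ⟨hn, hsupp⟩)
      exacts [⟨le_rfl, hK⟩, ⟨hn.le, (h n hn).1 hsupp⟩]
    · rintro ⟨hn, hnK⟩
      rcases eq_or_lt_of_le hn with rfl | hn
      exacts [Or.inl rfl, Or.inr ⟨hn, (h n hn).2 hnK⟩]
  rw [kplus, if_neg (not_lt.2 hji.le), hset, csSup_Icc hK]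

/-- The weight `w₁Λ₁ + w₂Λ₂ − aα₁ − bα₂` of `ŝl₂`, in coordinates. -/
noncomputable def wt2 (w1 w2 a b : ℤ) : ℕ → ℝ := fun k =>
  if k = 0 then ((w1 + w2 : ℤ) : ℝ)
  else if k = 1 then (w1 : ℝ) / 2 - a + b
  else if k = 2 then -(w1 : ℝ) / 2 + a - b
  else if k = 3 then (b : ℝ)
  else 0

section Coordinates

variable (w1 w2 a b : ℤ)

theorem smul_fundWt_add_smul_fundWt :
    (w1 : ℝ) • fundWt 2 1 + (w2 : ℝ) • fundWt 2 2 = wt2 w1 w2 0 0 := by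
  have hIcc : (Finset.Icc 1 2 : Finset ℕ) = {1, 2} := by decide
  funext k
  rcases k with _ | _ | _ | _ | k <;>
    simp [fundWt, proj, eVec, wt2, Finset.sum_range_succ, hIcc] <;> ring

theorem wt2_sub_smul_simpleRoot_one (c : ℤ) :
    wt2 w1 w2 a b - (c : ℝ) • simpleRoot 2 1 = wt2 w1 w2 (a + c) b := by
  funext k
  rcases k with _ | _ | _ | _ | k <;> simp [wt2, simpleRoot, eVec] <;> ring

theorem wt2_sub_smul_simpleRoot_two (c : ℤ) :
    wt2 w1 w2 a b - (c : ℝ) • simpleRoot 2 2 = wt2 w1 w2 a (b + c) := by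
  funext k
  rcases k with _ | _ | _ | _ | k <;> simp [wt2, simpleRoot, eVec] <;> ring

theorem wt2_add_alphaIJ_one_two (n : ℤ) :
    wt2 w1 w2 a b + alphaIJ 2 1 2 n = wt2 w1 w2 (a - 1 - n) (b - n) := by
  funext k
  rcases k with _ | _ | _ | _ | k <;> simp [wt2, alphaIJ, nullRoot, eVec] <;> ring

theorem wt2_add_alphaIJ_two_one (n : ℤ) :
    wt2 w1 w2 a b + alphaIJ 2 2 1 n = wt2 w1 w2 (a + 1 - n) (b - n) := by
  funext k
  rcases k with _ | _ | _ | _ | k <;> simp [wt2, alphaIJ, nullRoot, eVec] <;> ring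

theorem dot_simpleCoroot_one_wt2 :
    dot 2 (simpleCoroot 2 1) (wt2 w1 w2 a b) = ((w1 - 2 * a + 2 * b : ℤ) : ℝ) := by
  simp [dot, simpleCoroot, eVec, wt2, Finset.sum_range_succ]
  ring

theorem dot_simpleCoroot_two_wt2 :
    dot 2 (simpleCoroot 2 2) (wt2 w1 w2 a b) = ((w2 + 2 * a - 2 * b : ℤ) : ℝ) := by
  simp [dot, simpleCoroot, eVec, wt2, Finset.sum_range_succ]
  ring

theorem sAct_one_wt2 : sAct 2 1 (wt2 w1 w2 a b) = wt2 w1 w2 (w1 + 2 * b - a) b := by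
  rw [sAct, dot_simpleCoroot_one_wt2, wt2_sub_smul_simpleRoot_one]
  ring_nf

theorem sAct_two_wt2 : sAct 2 2 (wt2 w1 w2 a b) = wt2 w1 w2 a (w2 + 2 * a - b) := by
  rw [sAct, dot_simpleCoroot_two_wt2, wt2_sub_smul_simpleRoot_two]
  ring_nf

theorem leRoot_wt2_iff : LeRoot 2 (wt2 w1 w2 a b) (wt2 w1 w2 0 0) ↔ 0 ≤ a ∧ 0 ≤ b := by
  have hIcc : (Finset.Icc 1 2 : Finset ℕ) = {1, 2} := by decide
  constructor
  · rintro ⟨c, hc⟩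
    have h1 := congrFun hc 1
    have h3 := congrFun hc 3
    simp [hIcc, wt2, simpleRoot, eVec] at h1 h3
    have ha : (a : ℝ) = c 1 := by linarith
    have hb : (b : ℝ) = c 2 := by linarith
    exact ⟨by exact_mod_cast ha ▸ (c 1).cast_nonneg, by exact_mod_cast hb ▸ (c 2).cast_nonneg⟩
  · rintro ⟨ha, hb⟩
    refine ⟨fun i => if i = 1 then a.toNat else b.toNat, ?_⟩
    have ha' : ((a.toNat : ℕ) : ℝ) = a := by exact_mod_cast Int.toNat_of_nonneg ha
    have hb' : ((b.toNat : ℕ) : ℝ) = b := by exact_mod_cast Int.toNat_of_nonneg hb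
    funext k
    rcases k with _ | _ | _ | _ | k <;> simp [hIcc, wt2, simpleRoot, eVec, ha', hb'] <;> ring

theorem foldr_sAct_wt2 (L : List ℕ) (hL : ∀ i ∈ L, 1 ≤ i ∧ i ≤ 2) :
    ∃ m : ℤ,
      L.foldr (sAct 2) (wt2 w1 w2 a b) =
        wt2 w1 w2 (a + m ^ 2 * (w1 + w2) - m * (w2 + 2 * a - 2 * b))
          (b + m ^ 2 * (w1 + w2) + m * (w1 - 2 * a + 2 * b)) ∨
      L.foldr (sAct 2) (wt2 w1 w2 a b) =
        wt2 w1 w2 (w1 + 2 * b - a + m ^ 2 * (w1 + w2) - m * (2 * w1 + w2 - 2 * a + 2 * b))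
          (b + m ^ 2 * (w1 + w2) - m * (w1 - 2 * a + 2 * b)) := by
  induction L with
  | nil => exact ⟨0, Or.inl (by rw [List.foldr_nil]; ring_nf)⟩
  | cons i L ih =>
    have hi : i = 1 ∨ i = 2 := by have := hL i List.mem_cons_self; omega
    obtain ⟨m, hm | hm⟩ := ih fun j hj => hL j (List.mem_cons_of_mem i hj) <;>
      rw [List.foldr_cons, hm] <;>
      rcases hi with rfl | rfl
    · exact ⟨-m, Or.inr (by rw [sAct_one_wt2]; ring_nf)⟩
    · exact ⟨1 - m, Or.inr (by rw [sAct_two_wt2]; ring_nf)⟩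
    · exact ⟨-m, Or.inl (by rw [sAct_one_wt2]; ring_nf)⟩
    · exact ⟨1 - m, Or.inl (by rw [sAct_two_wt2]; ring_nf)⟩

end Coordinates

section Support

variable {w1 w2 a b : ℤ}

theorem InSupp.coeff_nonneg (h : InSupp 2 (wt2 w1 w2 0 0) (wt2 w1 w2 a b)) : 0 ≤ a ∧ 0 ≤ b :=
  (leRoot_wt2_iff w1 w2 a b).1 (h [] (by simp))

theorem inSupp_wt2_of_dominant (ha : 0 ≤ a) (hb : 0 ≤ b) (hX : 0 ≤ w1 - 2 * a + 2 * b)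
    (hY : 0 ≤ w2 + 2 * a - 2 * b) : InSupp 2 (wt2 w1 w2 0 0) (wt2 w1 w2 a b) := by
  intro L hL
  have hm (m : ℤ) : 0 ≤ m * (m - 1) := by
    rcases le_or_gt 1 m with h | h <;> nlinarith
  obtain ⟨m, hL' | hL'⟩ := foldr_sAct_wt2 w1 w2 a b L hL <;>
    rw [hL', leRoot_wt2_iff] <;>
    constructor <;>
    linarith [mul_nonneg (sq_nonneg m) hX, mul_nonneg (sq_nonneg m) hY,
      mul_nonneg (sq_nonneg (m - 1)) hX, mul_nonneg (hm m) hX, mul_nonneg (hm m) hY,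
      mul_nonneg (hm (-m)) hX]

theorem inSupp_wt2_of_sAct_one (h : InSupp 2 (wt2 w1 w2 0 0) (wt2 w1 w2 (w1 + 2 * b - a) b)) :
    InSupp 2 (wt2 w1 w2 0 0) (wt2 w1 w2 a b) := by
  simpa only [sAct_one_wt2, sub_sub_cancel] using h.sAct le_rfl one_le_two

theorem inSupp_wt2_of_sAct_two (h : InSupp 2 (wt2 w1 w2 0 0) (wt2 w1 w2 a (w2 + 2 * a - b))) :
    InSupp 2 (wt2 w1 w2 0 0) (wt2 w1 w2 a b) := by
  simpa only [sAct_two_wt2, sub_sub_cancel] using h.sAct one_le_two le_rfl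

end Support

section Kplus

variable {w1 w2 A B : ℤ}

theorem kplus_one_two_wt2 (hw1 : 0 ≤ w1) (hw2 : 0 ≤ w2) (hA : 0 ≤ A) (hB : 0 ≤ B)
    (hX : 0 ≤ w1 - 2 * A + 2 * B) (hY : 0 ≤ w2 + 2 * A - 2 * B) (hcase : 0 < w2 ∨ B < A) :
    kplus 2 (wt2 w1 w2 0 0) (wt2 w1 w2 A B) 1 2 = min (A - 1) B := by
  refine kplus_eq_of_lt one_lt_two (by omega) fun n hn => ?_
  rw [wt2_add_alphaIJ_one_two]
  refine ⟨fun h => ?_, fun hnK => ?_⟩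
  · have := h.coeff_nonneg
    omega
  · by_cases hY2 : 2 ≤ w2 + 2 * A - 2 * B
    · exact inSupp_wt2_of_dominant (by omega) (by omega) (by omega) (by omega)
    · exact inSupp_wt2_of_sAct_two
        (inSupp_wt2_of_dominant (by omega) (by omega) (by omega) (by omega))

theorem kplus_one_two_wt2_of_eq (hw1 : 1 ≤ w1) (hA : 1 ≤ A) :
    kplus 2 (wt2 w1 0 0 0) (wt2 w1 0 A A) 1 2 = A - 2 := by
  refine kplus_eq_of_lt one_lt_two (by omega) fun n hn => ?_
  rw [wt2_add_alphaIJ_one_two]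
  refine ⟨fun h => ?_, fun hnK => ?_⟩
  · have h2 := h.sAct one_le_two le_rfl
    rw [sAct_two_wt2] at h2
    have := h2.coeff_nonneg
    omega
  · refine inSupp_wt2_of_sAct_two ?_
    by_cases hw2 : 2 ≤ w1
    · exact inSupp_wt2_of_dominant (by omega) (by omega) (by omega) (by omega)
    · exact inSupp_wt2_of_sAct_one
        (inSupp_wt2_of_dominant (by omega) (by omega) (by omega) (by omega))

theorem kplus_two_one_wt2 (hw1 : 0 ≤ w1) (hw2 : 0 ≤ w2) (hA : 0 ≤ A) (hB : 0 ≤ B)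
    (hX : 0 ≤ w1 - 2 * A + 2 * B) (hY : 0 ≤ w2 + 2 * A - 2 * B) (hcase : 0 < w1 ∨ A < B) :
    kplus 2 (wt2 w1 w2 0 0) (wt2 w1 w2 A B) 2 1 = min (A + 1) B := by
  refine kplus_eq_of_gt one_lt_two (by omega) fun n hn => ?_
  rw [wt2_add_alphaIJ_two_one]
  refine ⟨fun h => ?_, fun hnK => ?_⟩
  · have := h.coeff_nonneg
    omega
  · by_cases hX2 : 2 ≤ w1 - 2 * A + 2 * B
    · exact inSupp_wt2_of_dominant (by omega) (by omega) (by omega) (by omega)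
    · exact inSupp_wt2_of_sAct_one
        (inSupp_wt2_of_dominant (by omega) (by omega) (by omega) (by omega))

theorem kplus_two_one_wt2_of_eq (hw2 : 1 ≤ w2) (hA : 1 ≤ A) :
    kplus 2 (wt2 0 w2 0 0) (wt2 0 w2 A A) 2 1 = A - 1 := by
  refine kplus_eq_of_gt one_lt_two (by omega) fun n hn => ?_
  rw [wt2_add_alphaIJ_two_one]
  refine ⟨fun h => ?_, fun hnK => ?_⟩
  · have h1 := h.sAct le_rfl one_le_two
    rw [sAct_one_wt2] at h1
    have := h1.coeff_nonneg
    omega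
  · refine inSupp_wt2_of_sAct_one ?_
    by_cases hw2' : 2 ≤ w2
    · exact inSupp_wt2_of_dominant (by omega) (by omega) (by omega) (by omega)
    · exact inSupp_wt2_of_sAct_two
        (inSupp_wt2_of_dominant (by omega) (by omega) (by omega) (by omega))

end Kplus

/-- For `e = 2`, `Λ = w_1Λ_1 + w_2Λ_2` and dominant
`μ = Λ − b_1α_1 − b_2α_2` with `(b_1, b_2) ≠ (0, 0)`, setting `b_{12} = min(b_1−1, b_2)` and
`b_{21} = min(b_1+1, b_2)`:
`k⁺_{12} = b_{12}` if `w_2 > 0` or `b_1 > b_2`, and `k⁺_{12} = b_{12} − 1` if `w_2 = 0` and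
`b_1 = b_2`; `k⁻_{12} = b_{21}` if `w_1 > 0` or `b_2 > b_1`, and `k⁻_{12} = b_{21} − 1` if
`w_1 = 0` and `b_1 = b_2`.  (Recall `k⁻_{12} = k⁺_{21}`.) -/
theorem kplus_e2 (w1 w2 : ℕ) (hw : 1 ≤ w1 + w2) (b1 b2 : ℕ) (hb : ¬(b1 = 0 ∧ b2 = 0))
    (Λ μ : ℕ → ℝ)
    (hΛ : Λ = (w1 : ℝ) • fundWt 2 1 + (w2 : ℝ) • fundWt 2 2)
    (hμ : μ = Λ - (b1 : ℝ) • simpleRoot 2 1 - (b2 : ℝ) • simpleRoot 2 2)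
    (hdom : Dominant 2 μ) :
    ((0 < w2 ∨ b2 < b1) → kplus 2 Λ μ 1 2 = min ((b1 : ℤ) - 1) (b2 : ℤ)) ∧
    ((w2 = 0 ∧ b1 = b2) → kplus 2 Λ μ 1 2 = min ((b1 : ℤ) - 1) (b2 : ℤ) - 1) ∧
    ((0 < w1 ∨ b1 < b2) → kplus 2 Λ μ 2 1 = min ((b1 : ℤ) + 1) (b2 : ℤ)) ∧
    ((w1 = 0 ∧ b1 = b2) → kplus 2 Λ μ 2 1 = min ((b1 : ℤ) + 1) (b2 : ℤ) - 1) := by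
  have hΛ' : Λ = wt2 w1 w2 0 0 := by
    rw [hΛ]
    exact_mod_cast smul_fundWt_add_smul_fundWt w1 w2
  have hμ' : μ = wt2 w1 w2 b1 b2 := by
    rw [hμ, hΛ', ← Int.cast_natCast b1, ← Int.cast_natCast b2, wt2_sub_smul_simpleRoot_one,
      wt2_sub_smul_simpleRoot_two, zero_add, zero_add]
  have hX : 0 ≤ (w1 : ℤ) - 2 * b1 + 2 * b2 := by
    have h := hdom 1 le_rfl one_le_two
    rwa [hμ', dot_simpleCoroot_one_wt2, Int.cast_nonneg_iff] at h
  have hY : 0 ≤ (w2 : ℤ) + 2 * b1 - 2 * b2 := by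
    have h := hdom 2 one_le_two le_rfl
    rwa [hμ', dot_simpleCoroot_two_wt2, Int.cast_nonneg_iff] at h
  subst hΛ' hμ'
  refine ⟨fun hcase => ?_, fun ⟨hw2, hb12⟩ => ?_, fun hcase => ?_, fun ⟨hw1, hb12⟩ => ?_⟩
  · exact kplus_one_two_wt2 (by omega) (by omega) (by omega) (by omega) hX hY (by omega)
  · subst hw2 hb12
    rw [Nat.cast_zero, kplus_one_two_wt2_of_eq (by omega) (by omega)]
    omega
  · exact kplus_two_one_wt2 (by omega) (by omega) (by omega) (by omega) hX hY (by omega)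
  · subst hw1 hb12
    rw [Nat.cast_zero, kplus_two_one_wt2_of_eq (by omega) (by omega)]
    omega

end SleHat
end

section
/- Take e = 2, Λ = w_1Λ_1 + w_2Λ_2 with w_1, w_2 ∈ ℤ_{≥0} and w_1 + w_2 ≥ 1, and μ = Λ − b_1α_1 − b_2α_2 with b_1, b_2 ∈ ℤ_{≥0} and μ dominant. Then the pair (k⁻_{12}, k⁺_{12}) is of one of the forms (n, n), (n, n−1), or (n+1, n−1) for some integer n ≥ 0; moreover, it equals (n, n) if b_2 = n < b_1, or if b_1 = b_2 = n+1 and w_1 = 0; it equals (n, n−1) if b_1 = b_2 = n and w_1 ≠ 0 and w_2 ≠ 0; and it equals (n+1, n−1) if b_1 = n < b_2, or if b_1 = b_2 = n+1 and w_2 = 0. -/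
/-!
For `e = 2` write a weight as `Λ - a α₁ - c α₂`. The simple reflection `s_i` adds the pairing
`⟨α_i^∨, ·⟩` to the `i`-th coordinate of `(a, c)`, and `ν ≤ Λ` means `a, c ≥ 0`; so `ν ∈ supp Λ`
iff the whole `W`-orbit of `(a, c)` stays in the quadrant. A dominant `(a, c) ≥ 0` has this
property: a word in two involutions reduces to an alternating one, and along an alternating word
every reflection raises the point, because the two pairings add up to the level `w₁ + w₂ ≥ 0`.

Now `k⁺₁₂` is the largest `m ≥ 0` with `μ + α₁ + mδ ∈ supp Λ`, and since `α_{21;n} = α₂ + (n-1)δ`,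
`k⁻₁₂ - 1` is the same statistic for `α₂`, which the diagram automorphism `α₁ ↔ α₂` turns into
the first one. Positivity of the coordinates bounds `m` by `min (b₁ - 1) b₂`; the bound is attained
at a dominant point or at the reflection of one, except when `b₁ = b₂ ≥ 1` and `w₂ = 0`: then the
point `(0, 1)` leaves the support and the maximum drops by one.
-/

theorem exists_sublist_isChain_ne_foldr_eq {ι α : Type*} (f : ι → α → α)
    (hf : ∀ i, Function.Involutive (f i)) (L : List ι) :
    ∃ L' : List ι, L'.Sublist L ∧ L'.IsChain (· ≠ ·) ∧ ∀ x, L'.foldr f x = L.foldr f x := by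
  induction L with
  | nil => exact ⟨[], List.Sublist.slnil, List.isChain_nil, fun _ => rfl⟩
  | cons i T ih =>
    obtain ⟨L', hsub, hchain, hfold⟩ := ih
    by_cases hhead : L'.head? = some i
    · obtain ⟨T', rfl⟩ : ∃ T', L' = i :: T' := by
        cases L' with
        | nil => simp at hhead
        | cons j T' => exact ⟨T', by simp_all⟩
      refine ⟨T', (List.sublist_cons_self i T').trans (hsub.trans (List.sublist_cons_self i T)),
        hchain.tail, fun x => ?_⟩
      rw [List.foldr_cons, ← hfold, List.foldr_cons, hf i]
    · refine ⟨i :: L', hsub.cons_cons i, List.isChain_cons.2 ⟨?_, hchain⟩, fun x => by simp [hfold]⟩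
      rintro j hj rfl
      exact hhead hj

namespace SleHat

/-- `p = (a, c)` stands for the weight `w₁Λ₁ + w₂Λ₂ - a α₁ - c α₂` (`weightE2` below); `pairing i p`
is its pairing with `α_i^∨` and `reflect i` is `s_i`. -/
def pairing (w1 w2 : ℕ) (i : ℕ) (p : ℤ × ℤ) : ℤ :=
  if i = 1 then w1 - 2 * p.1 + 2 * p.2 else w2 + 2 * p.1 - 2 * p.2

def reflect (w1 w2 : ℕ) (i : ℕ) (p : ℤ × ℤ) : ℤ × ℤ :=
  if i = 1 then (p.1 + pairing w1 w2 1 p, p.2) else (p.1, p.2 + pairing w1 w2 2 p)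

section Model

variable {w1 w2 : ℕ} {i : ℕ} {p : ℤ × ℤ}

@[simp] theorem pairing_one : pairing w1 w2 1 p = w1 - 2 * p.1 + 2 * p.2 := rfl

@[simp] theorem pairing_two : pairing w1 w2 2 p = w2 + 2 * p.1 - 2 * p.2 := rfl

@[simp] theorem reflect_one : reflect w1 w2 1 p = (p.1 + pairing w1 w2 1 p, p.2) := rfl

@[simp] theorem reflect_two : reflect w1 w2 2 p = (p.1, p.2 + pairing w1 w2 2 p) := rfl

theorem reflect_involutive (w1 w2 i : ℕ) : Function.Involutive (reflect w1 w2 i) := by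
  intro p
  by_cases hi : i = 1 <;> ext <;> simp [reflect, pairing, hi] <;> ring

def OrbitNonneg (w1 w2 : ℕ) (p : ℤ × ℤ) : Prop :=
  ∀ L : List ℕ, (∀ i ∈ L, 1 ≤ i ∧ i ≤ 2) → 0 ≤ L.foldr (reflect w1 w2) p

theorem OrbitNonneg.nonneg (h : OrbitNonneg w1 w2 p) : 0 ≤ p := h [] (by simp)

theorem orbitNonneg_reflect_iff (hi : 1 ≤ i ∧ i ≤ 2) :
    OrbitNonneg w1 w2 (reflect w1 w2 i p) ↔ OrbitNonneg w1 w2 p := by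
  have happend : ∀ L : List ℕ, (∀ j ∈ L, 1 ≤ j ∧ j ≤ 2) → ∀ j ∈ L ++ [i], 1 ≤ j ∧ j ≤ 2 := by
    simp only [List.mem_append, List.mem_singleton]
    rintro L hL j (hj | rfl)
    exacts [hL j hj, hi]
  refine ⟨fun h L hL => ?_, fun h L hL => ?_⟩
  · simpa [reflect_involutive w1 w2 i p] using h (L ++ [i]) (happend L hL)
  · simpa using h (L ++ [i]) (happend L hL)

theorem le_foldr_reflect_of_isChain (hp1 : 0 ≤ pairing w1 w2 1 p) (hp2 : 0 ≤ pairing w1 w2 2 p)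
    {L : List ℕ} (hL : ∀ i ∈ L, 1 ≤ i ∧ i ≤ 2) (hchain : L.IsChain (· ≠ ·)) :
    p ≤ L.foldr (reflect w1 w2) p ∧
      ∀ i, 1 ≤ i → i ≤ 2 → L.head? ≠ some i → 0 ≤ pairing w1 w2 i (L.foldr (reflect w1 w2) p) := by
  induction L with
  | nil =>
    refine ⟨le_rfl, fun i h1 h2 _ => ?_⟩
    obtain rfl | rfl : i = 1 ∨ i = 2 := by omega
    exacts [hp1, hp2]
  | cons j T ih =>
    obtain ⟨hle, hpair⟩ := ih (fun i hi => hL i (List.mem_cons_of_mem j hi)) hchain.tail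
    have hj := hL j List.mem_cons_self
    have hjr : 0 ≤ pairing w1 w2 j (T.foldr (reflect w1 w2) p) :=
      hpair j hj.1 hj.2 fun h => (List.isChain_cons.1 hchain).1 j h rfl
    -- the two pairings add up to `w1 + w2 ≥ 0`, so reflecting `r` in the `j`-th root raises it
    -- and leaves the other pairing `≥ 0`
    simp only [List.foldr_cons, List.head?_cons, ne_eq, Option.some.injEq]
    generalize T.foldr (reflect w1 w2) p = r at hle hjr ⊢
    obtain rfl | rfl : j = 1 ∨ j = 2 := by omega
    all_goals
      refine ⟨?_, fun i h1 h2 hij => ?_⟩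
      · simp only [reflect_one, reflect_two, pairing_one, pairing_two, Prod.le_def] at hle hjr ⊢
        omega
      · obtain rfl | rfl : i = 1 ∨ i = 2 := by omega
        all_goals
          simp only [reflect_one, reflect_two, pairing_one, pairing_two, not_true_eq_false]
            at hjr hij ⊢ <;> omega

theorem orbitNonneg_of_dominant (hp : 0 ≤ p) (hp1 : 0 ≤ pairing w1 w2 1 p)
    (hp2 : 0 ≤ pairing w1 w2 2 p) : OrbitNonneg w1 w2 p := by
  intro L hL
  obtain ⟨L', hsub, hchain, hfold⟩ :=
    exists_sublist_isChain_ne_foldr_eq (reflect w1 w2) (reflect_involutive w1 w2) L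
  rw [← hfold]
  exact hp.trans (le_foldr_reflect_of_isChain hp1 hp2 (fun i hi => hL i (hsub.subset hi)) hchain).1

theorem swap_reflect (hi : 1 ≤ i ∧ i ≤ 2) (p : ℤ × ℤ) :
    (reflect w1 w2 i p).swap = reflect w2 w1 (3 - i) p.swap := by
  obtain rfl | rfl : i = 1 ∨ i = 2 := by omega
  all_goals
    ext <;> simp
    ring

theorem swap_foldr_reflect {L : List ℕ} (hL : ∀ i ∈ L, 1 ≤ i ∧ i ≤ 2) (p : ℤ × ℤ) :
    (L.foldr (reflect w1 w2) p).swap = (L.map (3 - ·)).foldr (reflect w2 w1) p.swap := by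
  induction L with
  | nil => rfl
  | cons i T ih =>
    rw [List.foldr_cons, swap_reflect (hL i List.mem_cons_self),
      ih fun j hj => hL j (List.mem_cons_of_mem i hj)]
    rfl

theorem OrbitNonneg.swap (h : OrbitNonneg w1 w2 p) : OrbitNonneg w2 w1 p.swap := by
  intro L hL
  have hL' : ∀ i ∈ L.map (3 - ·), 1 ≤ i ∧ i ≤ 2 := by
    simp only [List.mem_map]
    rintro _ ⟨i, hi, rfl⟩
    have := hL i hi
    omega
  rw [← Prod.swap_swap (L.foldr _ _), swap_foldr_reflect hL, Prod.swap_swap, ← Prod.swap_le_swap]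
  exact h _ hL'

theorem orbitNonneg_swap_iff : OrbitNonneg w2 w1 p.swap ↔ OrbitNonneg w1 w2 p :=
  ⟨fun h => by simpa using h.swap, OrbitNonneg.swap⟩

theorem orbitNonneg_zero_mk {c : ℤ} (hc : 0 ≤ c) (hcw : c ≤ w2) : OrbitNonneg w1 w2 (0, c) := by
  rcases le_total (2 * c) w2 with h | h
  · apply orbitNonneg_of_dominant <;> simp [Prod.le_def] <;> omega
  · rw [← orbitNonneg_reflect_iff (i := 2) (by norm_num)]
    apply orbitNonneg_of_dominant <;> simp [Prod.le_def] <;> omega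

theorem not_orbitNonneg_zero_one : ¬ OrbitNonneg w1 0 (0, 1) := by
  intro h
  have := ((orbitNonneg_reflect_iff (i := 2) (by norm_num)).2 h).nonneg
  simp [Prod.le_def] at this

/-- Shifting both coordinates by `-m` adds `mδ = m(α₁ + α₂)` to the weight; `-1` is the default
value in `kplus`. -/
def deltaString (w1 w2 : ℕ) (x y : ℤ) : Set ℤ :=
  {-1} ∪ {m : ℤ | 0 ≤ m ∧ OrbitNonneg w1 w2 (x - m, y - m)}

theorem isGreatest_deltaString {b1 b2 : ℕ} (hw : 1 ≤ w1 + w2)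
    (h1 : 0 ≤ pairing w1 w2 1 (b1, b2)) (h2 : 0 ≤ pairing w1 w2 2 (b1, b2)) :
    IsGreatest (deltaString w1 w2 (b1 - 1) b2)
      (if b1 = b2 ∧ 1 ≤ b1 ∧ w2 = 0 then (b1 : ℤ) - 2 else min ((b1 : ℤ) - 1) b2) := by
  simp only [pairing_one, pairing_two] at h1 h2
  refine ⟨?_, fun m hm => ?_⟩
  · split_ifs with hex
    · obtain ⟨rfl, hb, rfl⟩ := hex
      rcases hb.eq_or_lt with hb | hb
      · exact Or.inl (by simp [← hb])
      · refine Or.inr ⟨by omega, ?_⟩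
        rw [show ((b1 : ℤ) - 1 - (b1 - 2), (b1 : ℤ) - (b1 - 2)) = (1, 2) by
            simp only [Prod.mk.injEq]; omega,
          ← orbitNonneg_reflect_iff (i := 2) (by norm_num),
          show reflect w1 0 2 (1, 2) = (0, 1).swap by simp, orbitNonneg_swap_iff]
        exact orbitNonneg_zero_mk zero_le_one (by omega)
    · rcases lt_or_ge b2 b1 with hlt | hle
      · rw [min_eq_right (by omega)]
        refine Or.inr ⟨by omega, orbitNonneg_of_dominant ?_ ?_ ?_⟩ <;>
          simp [Prod.le_def] <;> omega
      · rw [min_eq_left (by omega)]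
        rcases Nat.eq_zero_or_pos b1 with hb | hb
        · exact Or.inl (by simp [hb])
        · refine Or.inr ⟨by omega, ?_⟩
          rw [show ((b1 : ℤ) - 1 - (b1 - 1), (b2 : ℤ) - (b1 - 1)) = (0, (b2 : ℤ) - b1 + 1) by
            simp only [Prod.mk.injEq]; omega]
          exact orbitNonneg_zero_mk (by omega) (by omega)
  · rcases hm with hm | ⟨hm0, hm⟩
    · rw [Set.mem_singleton_iff.1 hm]
      split_ifs <;> omega
    · have hnn := hm.nonneg
      simp only [Prod.le_def, Prod.fst_zero, Prod.snd_zero] at hnn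
      split_ifs with hex
      · obtain ⟨rfl, -, rfl⟩ := hex
        by_contra! hlt
        rw [show ((b1 : ℤ) - 1 - m, (b1 : ℤ) - m) = (0, 1) by
          simp only [Prod.mk.injEq]; omega] at hm
        exact not_orbitNonneg_zero_one hm
      · omega

end Model

theorem eVec_apply (k m : ℕ) : eVec k m = if m = k then 1 else 0 := rfl

noncomputable def weightE2 (w1 w2 : ℕ) (p : ℤ × ℤ) : ℕ → ℝ :=
  (w1 : ℝ) • fundWt 2 1 + (w2 : ℝ) • fundWt 2 2 - (p.1 : ℝ) • simpleRoot 2 1 -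
    (p.2 : ℝ) • simpleRoot 2 2

theorem weightE2_apply (w1 w2 : ℕ) (p : ℤ × ℤ) (k : ℕ) :
    weightE2 w1 w2 p k =
      if k = 0 then (w1 + w2 : ℝ) else if k = 1 then w1 / 2 - p.1 + p.2
      else if k = 2 then -(w1 / 2) + p.1 - p.2 else if k = 3 then (p.2 : ℝ) else 0 := by
  rcases k with _ | _ | _ | _ | k <;>
    simp [weightE2, fundWt, proj, simpleRoot, eVec_apply, Finset.sum_range_succ,
      show Finset.Icc 1 2 = {1, 2} from rfl] <;> ring

theorem dot_simpleCoroot_weightE2 {i : ℕ} (hi : 1 ≤ i ∧ i ≤ 2) (w1 w2 : ℕ) (p : ℤ × ℤ) :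
    dot 2 (simpleCoroot 2 i) (weightE2 w1 w2 p) = pairing w1 w2 i p := by
  obtain rfl | rfl : i = 1 ∨ i = 2 := by omega
  all_goals
    simp [dot, Finset.sum_range_succ, simpleCoroot, eVec_apply, weightE2_apply, pairing]
    ring

theorem sAct_weightE2 {i : ℕ} (hi : 1 ≤ i ∧ i ≤ 2) (w1 w2 : ℕ) (p : ℤ × ℤ) :
    sAct 2 i (weightE2 w1 w2 p) = weightE2 w1 w2 (reflect w1 w2 i p) := by
  rw [sAct, dot_simpleCoroot_weightE2 hi]
  obtain rfl | rfl : i = 1 ∨ i = 2 := by omega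
  all_goals
    simp only [weightE2, reflect, reduceIte, OfNat.ofNat_ne_one, Int.cast_add]
    module

theorem alphaIJ_one_two (n : ℤ) :
    alphaIJ 2 1 2 n = ((n : ℝ) + 1) • simpleRoot 2 1 + (n : ℝ) • simpleRoot 2 2 := by
  ext k
  rcases k with _ | _ | _ | _ | k <;> simp [alphaIJ, nullRoot, simpleRoot, eVec_apply]

theorem alphaIJ_two_one (n : ℤ) :
    alphaIJ 2 2 1 n = ((n : ℝ) - 1) • simpleRoot 2 1 + (n : ℝ) • simpleRoot 2 2 := by
  ext k
  rcases k with _ | _ | _ | _ | k <;> simp [alphaIJ, nullRoot, simpleRoot, eVec_apply]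
  ring

theorem weightE2_add_alphaIJ_one_two (w1 w2 : ℕ) (p : ℤ × ℤ) (n : ℤ) :
    weightE2 w1 w2 p + alphaIJ 2 1 2 n = weightE2 w1 w2 (p.1 - 1 - n, p.2 - n) := by
  rw [alphaIJ_one_two, weightE2, weightE2]
  push_cast
  module

theorem weightE2_add_alphaIJ_two_one (w1 w2 : ℕ) (p : ℤ × ℤ) (n : ℤ) :
    weightE2 w1 w2 p + alphaIJ 2 2 1 n = weightE2 w1 w2 (p.1 + 1 - n, p.2 - n) := by
  rw [alphaIJ_two_one, weightE2, weightE2]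
  push_cast
  module

theorem smul_simpleRoot_add_smul_injective {x y x' y' : ℝ}
    (h : x • simpleRoot 2 1 + y • simpleRoot 2 2 = x' • simpleRoot 2 1 + y' • simpleRoot 2 2) :
    x = x' ∧ y = y' := by
  have h1 := congrFun h 1
  have h3 := congrFun h 3
  simp [simpleRoot, eVec_apply] at h1 h3
  constructor <;> linarith

theorem leRoot_weightE2_iff (w1 w2 : ℕ) (p : ℤ × ℤ) :
    LeRoot 2 (weightE2 w1 w2 p) (weightE2 w1 w2 0) ↔ 0 ≤ p := by
  have hdiff : weightE2 w1 w2 0 - weightE2 w1 w2 p =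
      (p.1 : ℝ) • simpleRoot 2 1 + (p.2 : ℝ) • simpleRoot 2 2 := by
    simp only [weightE2, Prod.fst_zero, Prod.snd_zero, Int.cast_zero]
    module
  simp only [LeRoot, hdiff, Finset.sum_Icc_succ_top (show 1 ≤ 2 by norm_num), Finset.Icc_self,
    Finset.sum_singleton, Prod.le_def, Prod.fst_zero, Prod.snd_zero]
  constructor
  · rintro ⟨c, hc⟩
    obtain ⟨h1, h2⟩ := smul_simpleRoot_add_smul_injective hc
    exact ⟨by exact_mod_cast h1 ▸ (c 1).cast_nonneg, by exact_mod_cast h2 ▸ (c 2).cast_nonneg⟩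
  · rintro ⟨h1, h2⟩
    refine ⟨fun i => if i = 1 then p.1.toNat else p.2.toNat, ?_⟩
    have e1 : ((p.1.toNat : ℕ) : ℝ) = p.1 := by exact_mod_cast Int.toNat_of_nonneg h1
    have e2 : ((p.2.toNat : ℕ) : ℝ) = p.2 := by exact_mod_cast Int.toNat_of_nonneg h2
    simp [e1, e2]

theorem pairing_nonneg_of_dominant {w1 w2 i : ℕ} {p : ℤ × ℤ} (h : Dominant 2 (weightE2 w1 w2 p))
    (hi : 1 ≤ i ∧ i ≤ 2) : 0 ≤ pairing w1 w2 i p := by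
  have := h i hi.1 hi.2
  rw [dot_simpleCoroot_weightE2 hi] at this
  exact_mod_cast this

theorem foldr_sAct_weightE2 (w1 w2 : ℕ) {L : List ℕ} (hL : ∀ i ∈ L, 1 ≤ i ∧ i ≤ 2)
    (p : ℤ × ℤ) :
    L.foldr (fun i x => sAct 2 i x) (weightE2 w1 w2 p) =
      weightE2 w1 w2 (L.foldr (reflect w1 w2) p) := by
  induction L with
  | nil => rfl
  | cons i T ih =>
    rw [List.foldr_cons, ih fun j hj => hL j (List.mem_cons_of_mem i hj),
      sAct_weightE2 (hL i List.mem_cons_self), List.foldr_cons]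

theorem inSupp_weightE2_iff (w1 w2 : ℕ) (p : ℤ × ℤ) :
    InSupp 2 (weightE2 w1 w2 0) (weightE2 w1 w2 p) ↔ OrbitNonneg w1 w2 p :=
  forall₂_congr fun _ hL => by rw [foldr_sAct_weightE2 w1 w2 hL, leRoot_weightE2_iff]

theorem kplus_one_two_weightE2 (w1 w2 : ℕ) (p : ℤ × ℤ) :
    kplus 2 (weightE2 w1 w2 0) (weightE2 w1 w2 p) 1 2 =
      sSup (deltaString w1 w2 (p.1 - 1) p.2) := by
  simp only [kplus, if_pos one_lt_two, weightE2_add_alphaIJ_one_two, inSupp_weightE2_iff,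
    deltaString]

theorem kplus_two_one_weightE2 (w1 w2 : ℕ) (p : ℤ × ℤ) :
    kplus 2 (weightE2 w1 w2 0) (weightE2 w1 w2 p) 2 1 =
      sSup ((· + 1) '' deltaString w2 w1 (p.2 - 1) p.1) := by
  simp only [kplus, if_neg (lt_asymm one_lt_two), weightE2_add_alphaIJ_two_one,
    inSupp_weightE2_iff, deltaString, Set.image_union, Set.image_singleton]
  congr 1
  ext n
  simp only [Set.mem_union, Set.mem_singleton_iff, Set.mem_image, Set.mem_ofPred_eq]
  rw [← orbitNonneg_swap_iff, Prod.swap_prod_mk]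
  constructor
  · rintro (rfl | ⟨hn, h⟩)
    · exact Or.inl (by norm_num)
    · exact Or.inr ⟨n - 1, ⟨by omega, by convert h using 2 <;> ring⟩, by ring⟩
  · rintro (h | ⟨m, ⟨hm, h⟩, rfl⟩)
    · exact Or.inl (by omega)
    · exact Or.inr ⟨by omega, by convert h using 2 <;> ring⟩

/-- For `e = 2`, `Λ = w_1Λ_1 + w_2Λ_2` and dominant
`μ = Λ − b_1α_1 − b_2α_2`, the pair `(k⁻_{12}, k⁺_{12})` has one of the forms `(n, n)`,
`(n, n−1)`, `(n+1, n−1)` for some integer `n ≥ 0`; moreover it equals `(n, n)` if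
`b_2 = n < b_1`, or `b_1 = b_2 = n+1` and `w_1 = 0`; it equals `(n, n−1)` if `b_1 = b_2 = n`
and `w_1 ≠ 0 ≠ w_2`; and it equals `(n+1, n−1)` if `b_1 = n < b_2`, or `b_1 = b_2 = n+1` and
`w_2 = 0`.  (Recall `k⁻_{12} = k⁺_{21}`.) -/
theorem kpair_e2 (w1 w2 : ℕ) (hw : 1 ≤ w1 + w2) (b1 b2 : ℕ)
    (Λ μ : ℕ → ℝ)
    (hΛ : Λ = (w1 : ℝ) • fundWt 2 1 + (w2 : ℝ) • fundWt 2 2)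
    (hμ : μ = Λ - (b1 : ℝ) • simpleRoot 2 1 - (b2 : ℝ) • simpleRoot 2 2)
    (hdom : Dominant 2 μ) :
    (∃ n : ℤ, 0 ≤ n ∧
      ((kplus 2 Λ μ 2 1, kplus 2 Λ μ 1 2) = (n, n) ∨
       (kplus 2 Λ μ 2 1, kplus 2 Λ μ 1 2) = (n, n - 1) ∨
       (kplus 2 Λ μ 2 1, kplus 2 Λ μ 1 2) = (n + 1, n - 1))) ∧
    (∀ n : ℤ, 0 ≤ n →
      ((((b2 : ℤ) = n ∧ n < (b1 : ℤ)) ∨ ((b1 : ℤ) = n + 1 ∧ (b2 : ℤ) = n + 1 ∧ w1 = 0)) →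
        (kplus 2 Λ μ 2 1, kplus 2 Λ μ 1 2) = (n, n)) ∧
      (((b1 : ℤ) = n ∧ (b2 : ℤ) = n ∧ w1 ≠ 0 ∧ w2 ≠ 0) →
        (kplus 2 Λ μ 2 1, kplus 2 Λ μ 1 2) = (n, n - 1)) ∧
      ((((b1 : ℤ) = n ∧ n < (b2 : ℤ)) ∨ ((b1 : ℤ) = n + 1 ∧ (b2 : ℤ) = n + 1 ∧ w2 = 0)) →
        (kplus 2 Λ μ 2 1, kplus 2 Λ μ 1 2) = (n + 1, n - 1))) := by
  have hΛw : Λ = weightE2 w1 w2 0 := by simp [hΛ, weightE2]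
  have hμw : μ = weightE2 w1 w2 (b1, b2) := by simp [hμ, hΛ, weightE2]
  rw [hμw] at hdom
  have hd1 := pairing_nonneg_of_dominant hdom (i := 1) (by norm_num)
  have hd2 := pairing_nonneg_of_dominant hdom (i := 2) (by norm_num)
  have hplus := isGreatest_deltaString hw hd1 hd2
  have hminus := (add_left_strictMono (a := (1 : ℤ))).map_isGreatest.2 <|
    isGreatest_deltaString (w1 := w2) (w2 := w1) (b1 := b2) (b2 := b1) (by omega)
      (by simp only [pairing_one, pairing_two] at hd2 ⊢; omega)
      (by simp only [pairing_one, pairing_two] at hd1 ⊢; omega)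
  have hkminus := (kplus_two_one_weightE2 w1 w2 (b1, b2)).trans hminus.csSup_eq
  have hkplus := (kplus_one_two_weightE2 w1 w2 (b1, b2)).trans hplus.csSup_eq
  rw [← hΛw, ← hμw] at hkminus hkplus
  generalize kplus 2 Λ μ 2 1 = x at hkminus ⊢
  generalize kplus 2 Λ μ 1 2 = y at hkplus ⊢
  simp only [Prod.mk.injEq]
  -- `n = ⌊(x + y + 1) / 2⌋` fits each of the three shapes
  refine ⟨⟨(x + y + 1) / 2, ?_⟩, fun n hn => ?_⟩ <;> split_ifs at hkminus hkplus <;> omega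

end SleHat
end

section
/- Let Λ be a dominant weight of positive level and μ ∈ supp(Λ) a dominant weight. Then for all 1 ≤ i < j ≤ e, the statistics k⁺_{ij} and k⁻_{ij} satisfy k⁻_{ij} ≥ k⁺_{ij} ≥ k⁻_{ij} − 2. -/
/-!
Two properties of `supp(Λ)` give both bounds. It is stable under `W`, and it is convex along
root-lattice directions: if `ν` and `ν - cρ` lie in it, with `ρ` in the root lattice, then so
does `ν - kρ` for every integer `0 ≤ k ≤ c`, because each `W`-translate of `ρ` is again in the
lattice and the simple-root coefficients of `Λ - w(ν - kρ)` interpolate between those of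
`Λ - wν` and `Λ - w(ν - cρ)`.

Apply this with `k = 2` to a reflection `s_ρ ν = ν - ⟨ν, ρ^∨⟩ ρ`, which lies in `W`. For
`ρ = e_i - e_j` (the transposition `(i j)`) and `ν = μ + α_{ij;n}` one has
`⟨ν, ρ^∨⟩ = μ_i - μ_j + 2 ≥ 2` by dominance and `ν - 2ρ = μ + α_{ji;n}`; hence
`k⁺_{ij} ≤ k⁻_{ij}`. For `ρ = e_j - e_i + δ` (conjugate to `α_e` by a permutation of
`1, …, e`) and `ν = μ + α_{ji;n}` one has `⟨ν, ρ^∨⟩ = μ_0 - μ_i + μ_j + 2 ≥ 2` and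
`ν - 2ρ = μ + α_{ij;n-2}`; hence `k⁻_{ij} - 2 ≤ k⁺_{ij}`.
-/

theorem csSup_le_csSup_add {α : Type*} [ConditionallyCompleteLattice α] [Add α] [AddRightMono α]
    {s t : Set α} (c : α) (hs : s.Nonempty) (ht : BddAbove t)
    (h : ∀ a ∈ s, ∃ b ∈ t, a ≤ b + c) : sSup s ≤ sSup t + c :=
  csSup_le hs fun a ha =>
    let ⟨_, hb, hab⟩ := h a ha
    hab.trans (add_le_add_left (le_csSup ht hb) c)

namespace SleHat

open Finset

theorem eVec_self (k : ℕ) : eVec k k = 1 := if_pos rfl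

theorem eVec_of_ne {k m : ℕ} (h : m ≠ k) : eVec k m = 0 := if_neg h

theorem dot_sub_right (e : ℕ) (w x y : ℕ → ℝ) : dot e w (x - y) = dot e w x - dot e w y := by
  simp [dot, mul_sub, sum_sub_distrib]

theorem dot_smul_right (e : ℕ) (w : ℕ → ℝ) (c : ℝ) (x : ℕ → ℝ) :
    dot e w (c • x) = c * dot e w x := by
  simp [dot, mul_sum, mul_left_comm]

theorem dot_add_left (e : ℕ) (x y ν : ℕ → ℝ) : dot e (x + y) ν = dot e x ν + dot e y ν := by
  simp [dot, add_mul, sum_add_distrib]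

theorem dot_sub_left (e : ℕ) (x y ν : ℕ → ℝ) : dot e (x - y) ν = dot e x ν - dot e y ν := by
  simp [dot, sub_mul, sum_sub_distrib]

theorem dot_eVec_left {e a : ℕ} (ha : a < e + 2) (ν : ℕ → ℝ) : dot e (eVec a) ν = ν a := by
  simp [dot, eVec, ha]

theorem dot_simpleCoroot_of_lt {e k : ℕ} (hk : k < e) (ν : ℕ → ℝ) :
    dot e (simpleCoroot e k) ν = ν k - ν (k + 1) := by
  rw [simpleCoroot, if_neg hk.ne, dot_sub_left, dot_eVec_left (by omega),
    dot_eVec_left (by omega)]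

theorem dot_simpleCoroot_self (e : ℕ) (ν : ℕ → ℝ) :
    dot e (simpleCoroot e e) ν = ν 0 - ν 1 + ν e := by
  rw [simpleCoroot, if_pos rfl, dot_add_left, dot_sub_left, dot_eVec_left (by omega),
    dot_eVec_left (by omega), dot_eVec_left (by omega)]

theorem sAct_sub_smul (e k : ℕ) (ν ρ : ℕ → ℝ) (c : ℝ) :
    sAct e k (ν - c • ρ) = sAct e k ν - c • sAct e k ρ := by
  simp only [sAct, dot_sub_right, dot_smul_right, sub_smul, smul_sub, mul_smul]
  abel

theorem comp_swap_eq_sub_smul {a b : ℕ} (hab : a ≠ b) (ν : ℕ → ℝ) :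
    ν ∘ Equiv.swap a b = ν - (ν a - ν b) • (eVec a - eVec b) := by
  funext m
  rcases eq_or_ne m a with rfl | hma
  · simp [eVec, hab]
  rcases eq_or_ne m b with rfl | hmb
  · simp [eVec, hab.symm]
  · simp [eVec, hma, hmb, Equiv.swap_apply_of_ne_of_ne]

theorem sAct_of_lt {e k : ℕ} (hk : k < e) (ν : ℕ → ℝ) :
    sAct e k ν = ν ∘ Equiv.swap k (k + 1) := by
  rw [comp_swap_eq_sub_smul (by omega), sAct, dot_simpleCoroot_of_lt hk, simpleRoot, if_neg hk.ne]

theorem sAct_self (e : ℕ) (ν : ℕ → ℝ) :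
    sAct e e ν = ν - (ν 0 - ν 1 + ν e) • simpleRoot e e := by
  rw [sAct, dot_simpleCoroot_self]

def wordAct (e : ℕ) (L : List ℕ) (ν : ℕ → ℝ) : ℕ → ℝ := L.foldr (fun i x => sAct e i x) ν

theorem wordAct_sub_smul (e : ℕ) (L : List ℕ) (ν ρ : ℕ → ℝ) (c : ℝ) :
    wordAct e L (ν - c • ρ) = wordAct e L ν - c • wordAct e L ρ := by
  induction L with
  | nil => rfl
  | cons k L ih => exact (congrArg (sAct e k) ih).trans (sAct_sub_smul e k _ _ c)

def IsWeylMap (e : ℕ) (f : (ℕ → ℝ) → ℕ → ℝ) : Prop :=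
  ∃ L : List ℕ, (∀ i ∈ L, 1 ≤ i ∧ i ≤ e) ∧ ∀ ν, wordAct e L ν = f ν

theorem isWeylMap_id (e : ℕ) : IsWeylMap e id :=
  ⟨[], by simp, fun _ => rfl⟩

theorem isWeylMap_sAct {e k : ℕ} (hk : 1 ≤ k) (hke : k ≤ e) : IsWeylMap e (sAct e k) :=
  ⟨[k], by simp [hk, hke], fun _ => rfl⟩

theorem IsWeylMap.comp {e : ℕ} {f g : (ℕ → ℝ) → ℕ → ℝ} (hf : IsWeylMap e f)
    (hg : IsWeylMap e g) : IsWeylMap e (f ∘ g) := by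
  obtain ⟨L, hL, hLf⟩ := hf
  obtain ⟨M, hM, hMg⟩ := hg
  refine ⟨L ++ M, fun i hi => (List.mem_append.1 hi).elim (hL i) (hM i), fun ν => ?_⟩
  rw [Function.comp_apply, ← hMg, ← hLf]
  exact List.foldr_append

theorem IsWeylMap.inSupp {e : ℕ} {f : (ℕ → ℝ) → ℕ → ℝ} (hf : IsWeylMap e f) {Λ ν : ℕ → ℝ}
    (hν : InSupp e Λ ν) : InSupp e Λ (f ν) := by
  obtain ⟨M, hM, hMf⟩ := hf
  intro L hL
  rw [← hMf, wordAct, ← List.foldr_append]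
  exact hν (L ++ M) fun i hi => (List.mem_append.1 hi).elim (hL i) (hM i)

theorem IsWeylMap.comp_perm_mul {e : ℕ} {σ τ : Equiv.Perm ℕ} (hσ : IsWeylMap e (· ∘ ⇑σ))
    (hτ : IsWeylMap e (· ∘ ⇑τ)) : IsWeylMap e (· ∘ ⇑(σ * τ)) :=
  hτ.comp hσ

theorem isWeylMap_comp_swap {e a b : ℕ} (ha : 1 ≤ a) (hab : a ≤ b) (hb : b ≤ e) :
    IsWeylMap e (· ∘ ⇑(Equiv.swap a b)) := by
  induction b, hab using Nat.le_induction with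
  | base => rw [Equiv.swap_self]; exact isWeylMap_id e
  | succ b hab ih =>
    have hs : IsWeylMap e (· ∘ ⇑(Equiv.swap b (b + 1))) := by
      simpa only [← sAct_of_lt (e := e) (k := b) (by omega)] using
        isWeylMap_sAct (by omega) (by omega)
    rcases hab.eq_or_lt with rfl | hlt
    · exact hs
    · have hconj : Equiv.swap a (b + 1) =
          Equiv.swap b (b + 1) * Equiv.swap a b * Equiv.swap b (b + 1) := by
        rw [Equiv.swap_mul_swap_mul_swap hlt.ne (by omega), Equiv.swap_comm]
      rw [hconj]
      exact (hs.comp_perm_mul (ih (by omega))).comp_perm_mul hs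

theorem eVec_comp_perm_inv (k : ℕ) (σ : Equiv.Perm ℕ) : eVec k ∘ ⇑σ⁻¹ = eVec (σ k) := by
  funext m
  simp [eVec, Equiv.symm_apply_eq]

theorem IsWeylMap.conj_sAct_self {e : ℕ} (he : 1 ≤ e) {σ : Equiv.Perm ℕ}
    (hσ : IsWeylMap e (· ∘ ⇑σ)) (hσinv : IsWeylMap e (· ∘ ⇑σ⁻¹))
    (h0 : σ 0 = 0) (hlast : σ (e + 1) = e + 1) :
    IsWeylMap e fun ν =>
      ν - (ν 0 - ν (σ 1) + ν (σ e)) • (eVec (σ e) - eVec (σ 1) + nullRoot e) := by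
  convert hσinv.comp ((isWeylMap_sAct he le_rfl).comp hσ) using 1
  funext ν
  have hroot : simpleRoot e e ∘ ⇑σ⁻¹ = eVec (σ e) - eVec (σ 1) + nullRoot e := by
    rw [simpleRoot, if_pos rfl, nullRoot]
    funext m
    simp only [Function.comp_apply, Pi.add_apply, Pi.sub_apply, Pi.neg_apply]
    simp only [← Function.comp_apply (f := eVec _), eVec_comp_perm_inv, hlast]
    ring
  have hν : (ν ∘ ⇑σ) ∘ ⇑σ⁻¹ = ν := by
    funext m; simp
  simp only [Function.comp_apply, sAct_self, h0]
  rw [← hroot, ← hν]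
  funext m
  simp

theorem isWeylMap_affineReflection {e i j : ℕ} (hi : 1 ≤ i) (hij : i < j) (hje : j ≤ e) :
    IsWeylMap e fun ν => ν - (ν 0 - ν i + ν j) • (eVec j - eVec i + nullRoot e) := by
  have h1i := isWeylMap_comp_swap (e := e) le_rfl hi (by omega)
  have hje' := isWeylMap_comp_swap (e := e) (by omega) hje le_rfl
  have swap_of_ne {a b m : ℕ} (ha : m ≠ a) (hb : m ≠ b) : Equiv.swap a b m = m :=
    Equiv.swap_apply_of_ne_of_ne ha hb
  have key := IsWeylMap.conj_sAct_self (by omega) (h1i.comp_perm_mul hje')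
    (by simpa using hje'.comp_perm_mul h1i)
    (by simp only [Equiv.Perm.mul_apply, swap_of_ne (by omega : 0 ≠ j) (by omega : 0 ≠ e),
      swap_of_ne (by omega : 0 ≠ 1) (by omega : 0 ≠ i)])
    (by simp only [Equiv.Perm.mul_apply, swap_of_ne (by omega : e + 1 ≠ j) (by omega : e + 1 ≠ e),
      swap_of_ne (by omega : e + 1 ≠ 1) (by omega : e + 1 ≠ i)])
  simpa only [Equiv.Perm.mul_apply, swap_of_ne (by omega : 1 ≠ j) (by omega : 1 ≠ e),
    Equiv.swap_apply_left, Equiv.swap_apply_right, swap_of_ne (by omega : j ≠ 1) (by omega : j ≠ i)]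
    using key

def rootComb (e : ℕ) (c : ℕ → ℝ) : ℕ → ℝ := ∑ k ∈ Icc 1 e, c k • simpleRoot e k

theorem rootComb_add_smul (e : ℕ) (a b : ℕ → ℝ) (t : ℝ) :
    rootComb e a + t • rootComb e b = rootComb e fun k => a k + t * b k := by
  simp only [rootComb, smul_sum, ← sum_add_distrib, add_smul, mul_smul]

/-- The coordinate functional dual to `α_k`. -/
def rootCoeff (e k : ℕ) (v : ℕ → ℝ) : ℝ := ∑ r ∈ Icc 1 k, v r - v (e + 1)

theorem rootCoeff_simpleRoot {e k m : ℕ} (hk : 1 ≤ k) (hke : k ≤ e) (hm : 1 ≤ m) (hme : m ≤ e) :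
    rootCoeff e k (simpleRoot e m) = if m = k then 1 else 0 := by
  unfold rootCoeff simpleRoot
  split_ifs <;> simp [sum_add_distrib, sum_sub_distrib, eVec] <;> split_ifs <;> simp <;> omega

theorem rootCoeff_rootComb {e k : ℕ} (hk : 1 ≤ k) (hke : k ≤ e) (c : ℕ → ℝ) :
    rootCoeff e k (rootComb e c) = c k := by
  calc rootCoeff e k (rootComb e c) = ∑ m ∈ Icc 1 e, c m * rootCoeff e k (simpleRoot e m) := by
        simp only [rootCoeff, rootComb, Finset.sum_apply, Pi.smul_apply, smul_eq_mul, mul_sub,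
          mul_sum, sum_sub_distrib]
        rw [sum_comm]
    _ = c k := by
        rw [sum_congr rfl fun m hm => by
          rw [rootCoeff_simpleRoot hk hke (mem_Icc.1 hm).1 (mem_Icc.1 hm).2]]
        simp [hk, hke]

def rootLattice (e : ℕ) : AddSubgroup (ℕ → ℝ) where
  carrier := {ρ | ∃ g : ℕ → ℤ, ρ = rootComb e fun k => g k}
  zero_mem' := ⟨0, by simp [rootComb]⟩
  add_mem' := by
    rintro _ _ ⟨g, rfl⟩ ⟨h, rfl⟩
    exact ⟨g + h, by simpa using rootComb_add_smul e (fun k => g k) (fun k => h k) 1⟩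
  neg_mem' := by
    rintro _ ⟨g, rfl⟩
    exact ⟨-g, by simp [rootComb]⟩

theorem simpleRoot_mem_rootLattice {e k : ℕ} (hk : 1 ≤ k) (hke : k ≤ e) :
    simpleRoot e k ∈ rootLattice e :=
  ⟨Pi.single k 1, by simp [rootComb, Pi.single_apply, hk, hke]⟩

theorem eVec_sub_eVec_mem_rootLattice {e i j : ℕ} (hi : 1 ≤ i) (hij : i ≤ j) (hje : j ≤ e) :
    eVec i - eVec j ∈ rootLattice e := by
  induction j, hij using Nat.le_induction with
  | base => simp
  | succ j hij ih =>
    have hα : simpleRoot e j = eVec j - eVec (j + 1) := if_neg (by omega)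
    have hsum := add_mem (ih (by omega)) (simpleRoot_mem_rootLattice (k := j) (by omega) (by omega))
    rwa [hα, sub_add_sub_cancel] at hsum

theorem nullRoot_mem_rootLattice {e : ℕ} (he : 1 ≤ e) : nullRoot e ∈ rootLattice e := by
  have hsum := add_mem (eVec_sub_eVec_mem_rootLattice le_rfl he le_rfl)
    (simpleRoot_mem_rootLattice he le_rfl)
  convert hsum using 1
  rw [simpleRoot, if_pos rfl, nullRoot]
  abel

theorem eVec_apply_mem_bot (k m : ℕ) : eVec k m ∈ (⊥ : Subring ℝ) := by
  unfold eVec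
  split_ifs
  exacts [one_mem _, zero_mem _]

theorem simpleRoot_apply_mem_bot (e k m : ℕ) : simpleRoot e k m ∈ (⊥ : Subring ℝ) := by
  unfold simpleRoot
  split_ifs
  · exact sub_mem (add_mem (neg_mem (eVec_apply_mem_bot _ _)) (eVec_apply_mem_bot _ _))
      (eVec_apply_mem_bot _ _)
  · exact sub_mem (eVec_apply_mem_bot _ _) (eVec_apply_mem_bot _ _)

theorem simpleCoroot_apply_mem_bot (e k m : ℕ) : simpleCoroot e k m ∈ (⊥ : Subring ℝ) := by
  unfold simpleCoroot
  split_ifs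
  · exact add_mem (sub_mem (eVec_apply_mem_bot _ _) (eVec_apply_mem_bot _ _))
      (eVec_apply_mem_bot _ _)
  · exact sub_mem (eVec_apply_mem_bot _ _) (eVec_apply_mem_bot _ _)

theorem apply_mem_bot_of_mem_rootLattice {e : ℕ} {ρ : ℕ → ℝ} (hρ : ρ ∈ rootLattice e) (m : ℕ) :
    ρ m ∈ (⊥ : Subring ℝ) := by
  obtain ⟨g, rfl⟩ := hρ
  rw [rootComb, Finset.sum_apply]
  exact Subring.sum_mem _ fun k _ =>
    mul_mem (Subring.mem_bot.2 ⟨g k, rfl⟩) (simpleRoot_apply_mem_bot e k m)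

theorem dot_mem_bot (e : ℕ) {x y : ℕ → ℝ} (hx : ∀ m, x m ∈ (⊥ : Subring ℝ))
    (hy : ∀ m, y m ∈ (⊥ : Subring ℝ)) : dot e x y ∈ (⊥ : Subring ℝ) :=
  Subring.sum_mem _ fun m _ => mul_mem (hx m) (hy m)

theorem sAct_mem_rootLattice {e k : ℕ} (hk : 1 ≤ k) (hke : k ≤ e) {ρ : ℕ → ℝ}
    (hρ : ρ ∈ rootLattice e) : sAct e k ρ ∈ rootLattice e := by
  obtain ⟨z, hz⟩ := Subring.mem_bot.1 <|
    dot_mem_bot e (simpleCoroot_apply_mem_bot e k) (apply_mem_bot_of_mem_rootLattice hρ)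
  rw [sAct, ← hz, Int.cast_smul_eq_zsmul]
  exact sub_mem hρ (zsmul_mem (simpleRoot_mem_rootLattice hk hke) z)

theorem wordAct_mem_rootLattice {e : ℕ} {L : List ℕ} (hL : ∀ i ∈ L, 1 ≤ i ∧ i ≤ e)
    {ρ : ℕ → ℝ} (hρ : ρ ∈ rootLattice e) : wordAct e L ρ ∈ rootLattice e := by
  induction L with
  | nil => exact hρ
  | cons k L ih =>
    have hk := hL k List.mem_cons_self
    exact sAct_mem_rootLattice hk.1 hk.2 (ih fun i hi => hL i (List.mem_cons_of_mem k hi))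

theorem leRoot_of_intCoeff {e : ℕ} {ν Λ : ℕ → ℝ} (c : ℕ → ℤ) (hc : ∀ k ∈ Icc 1 e, 0 ≤ c k)
    (h : Λ - ν = rootComb e fun k => c k) : LeRoot e ν Λ :=
  ⟨fun k => (c k).toNat, h.trans (sum_congr rfl fun k hk => by
    dsimp only
    rw [← Int.cast_natCast, Int.toNat_of_nonneg (hc k hk)])⟩

theorem LeRoot.sub_natCast_smul {e : ℕ} {Λ ν ρ : ℕ → ℝ} {c : ℝ} (hν : LeRoot e ν Λ)
    (hc : LeRoot e (ν - c • ρ) Λ) (hρ : ρ ∈ rootLattice e) (k : ℕ) (hk : (k : ℝ) ≤ c) :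
    LeRoot e (ν - (k : ℝ) • ρ) Λ := by
  obtain ⟨A, hA : Λ - ν = rootComb e fun m => A m⟩ := hν
  obtain ⟨B, hB : _ = rootComb e fun m => B m⟩ := hc
  obtain ⟨g, rfl⟩ := hρ
  have hshift (t : ℝ) :
      Λ - (ν - t • rootComb e fun m => g m) = rootComb e fun m => A m + t * g m := by
    rw [← rootComb_add_smul, ← hA]
    abel
  have hB' (m : ℕ) (hm : m ∈ Icc 1 e) : (B m : ℝ) = A m + c * g m := by
    have hm' := mem_Icc.1 hm
    simpa only [rootCoeff_rootComb hm'.1 hm'.2] using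
      congrArg (rootCoeff e m) (hB.symm.trans (hshift c))
  refine leRoot_of_intCoeff (fun m => A m + k * g m) (fun m hm => ?_) (by push_cast; exact hshift k)
  -- `A m + k g m` lies between `A m ≥ 0` and `A m + c g m = B m ≥ 0`.
  rcases le_or_gt 0 (g m) with hg | hg
  · positivity
  · have hgR : (g m : ℝ) < 0 := by exact_mod_cast hg
    have : (0 : ℝ) ≤ A m + k * g m := by nlinarith [hB' m hm, (B m).cast_nonneg (α := ℝ)]
    exact_mod_cast this

theorem InSupp.sub_natCast_smul {e : ℕ} {Λ ν ρ : ℕ → ℝ} {c : ℝ} (hν : InSupp e Λ ν)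
    (hc : InSupp e Λ (ν - c • ρ)) (hρ : ρ ∈ rootLattice e) (k : ℕ) (hk : (k : ℝ) ≤ c) :
    InSupp e Λ (ν - (k : ℝ) • ρ) := by
  intro L hL
  have hcL : LeRoot e (wordAct e L ν - c • wordAct e L ρ) Λ := by
    rw [← wordAct_sub_smul]
    exact hc L hL
  change LeRoot e (wordAct e L (ν - (k : ℝ) • ρ)) Λ
  rw [wordAct_sub_smul]
  exact (hν L hL).sub_natCast_smul hcL (wordAct_mem_rootLattice hL hρ) k hk

theorem Dominant.apply_le_apply {e : ℕ} {μ : ℕ → ℝ} (hμ : Dominant e μ) {a b : ℕ} (ha : 1 ≤ a)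
    (hab : a ≤ b) (hb : b ≤ e) : μ b ≤ μ a := by
  induction b, hab using Nat.le_induction with
  | base => exact le_rfl
  | succ b hab ih =>
    have hb' := hμ b (by omega) (by omega)
    rw [dot_simpleCoroot_of_lt (by omega)] at hb'
    linarith [ih (by omega)]

theorem simpleRoot_apply_succ_nonpos {e k : ℕ} (hk : k ≤ e) : simpleRoot e k (e + 1) ≤ 0 := by
  unfold simpleRoot eVec
  split_ifs <;> simp <;> split_ifs <;> norm_num
  omega

theorem LeRoot.apply_succ_le {e : ℕ} {ν Λ : ℕ → ℝ} (h : LeRoot e ν Λ) :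
    Λ (e + 1) ≤ ν (e + 1) := by
  obtain ⟨c, hc⟩ := h
  have hlast : (∑ k ∈ Icc 1 e, (c k : ℝ) • simpleRoot e k) (e + 1) ≤ 0 := by
    rw [Finset.sum_apply]
    exact sum_nonpos fun k hk => mul_nonpos_of_nonneg_of_nonpos (Nat.cast_nonneg _)
      (simpleRoot_apply_succ_nonpos (mem_Icc.1 hk).2)
  have := congrFun hc (e + 1)
  simp only [Pi.sub_apply] at this
  linarith

theorem alphaIJ_apply_of_ne {e m : ℕ} (a b : ℕ) (n : ℤ) (hm : m ≠ e + 1) :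
    alphaIJ e a b n m = eVec a m - eVec b m := by
  simp [alphaIJ, nullRoot, eVec_of_ne hm]

theorem alphaIJ_apply_succ_s15 {e a b : ℕ} (n : ℤ) (ha : a ≠ e + 1) (hb : b ≠ e + 1) :
    alphaIJ e a b n (e + 1) = -n := by
  simp [alphaIJ, nullRoot, eVec_of_ne ha.symm, eVec_of_ne hb.symm, eVec_self]

theorem bddAbove_setOf_inSupp_add_alphaIJ {e a b : ℕ} (ha : a ≤ e) (hb : b ≤ e) (Λ μ : ℕ → ℝ) :
    BddAbove {n : ℤ | InSupp e Λ (μ + alphaIJ e a b n)} := by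
  refine ⟨⌊μ (e + 1) - Λ (e + 1)⌋, fun n hn => Int.le_floor.2 ?_⟩
  have := (hn [] (by simp)).apply_succ_le
  rw [List.foldr_nil, Pi.add_apply, alphaIJ_apply_succ_s15 n (by omega) (by omega)] at this
  linarith

theorem InSupp.add_alphaIJ_swap {e i j : ℕ} {Λ μ : ℕ → ℝ} (hμ : Dominant e μ) (hi : 1 ≤ i)
    (hij : i < j) (hje : j ≤ e) {n : ℤ} (h : InSupp e Λ (μ + alphaIJ e i j n)) :
    InSupp e Λ (μ + alphaIJ e j i n) := by
  have hrefl : InSupp e Λ ((μ + alphaIJ e i j n) ∘ Equiv.swap i j) :=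
    (isWeylMap_comp_swap hi hij.le hje).inSupp h
  rw [comp_swap_eq_sub_smul hij.ne] at hrefl
  have hpair : (μ + alphaIJ e i j n) i - (μ + alphaIJ e i j n) j = μ i - μ j + 2 := by
    simp only [Pi.add_apply, alphaIJ_apply_of_ne _ _ n (by omega : i ≠ e + 1),
      alphaIJ_apply_of_ne _ _ n (by omega : j ≠ e + 1), eVec_self, eVec_of_ne hij.ne,
      eVec_of_ne hij.ne']
    ring
  have h2 := h.sub_natCast_smul hrefl (eVec_sub_eVec_mem_rootLattice hi hij.le hje) 2 (by
    rw [hpair]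
    push_cast
    linarith [hμ.apply_le_apply hi hij.le hje])
  convert h2 using 1
  simp only [alphaIJ]
  module

theorem InSupp.add_alphaIJ_sub_two {e i j : ℕ} {Λ μ : ℕ → ℝ} (hμ : Dominant e μ) (hi : 1 ≤ i)
    (hij : i < j) (hje : j ≤ e) {n : ℤ} (h : InSupp e Λ (μ + alphaIJ e j i n)) :
    InSupp e Λ (μ + alphaIJ e i j (n - 2)) := by
  have hrefl := (isWeylMap_affineReflection hi hij hje).inSupp h
  have hρ : eVec j - eVec i + nullRoot e ∈ rootLattice e := by
    rw [show eVec j - eVec i + nullRoot e = nullRoot e - (eVec i - eVec j) by abel]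
    exact sub_mem (nullRoot_mem_rootLattice (by omega))
      (eVec_sub_eVec_mem_rootLattice hi hij.le hje)
  have hpair : (μ + alphaIJ e j i n) 0 - (μ + alphaIJ e j i n) i + (μ + alphaIJ e j i n) j =
      μ 0 - μ i + μ j + 2 := by
    simp only [Pi.add_apply, alphaIJ_apply_of_ne _ _ n (by omega : i ≠ e + 1),
      alphaIJ_apply_of_ne _ _ n (by omega : j ≠ e + 1),
      alphaIJ_apply_of_ne _ _ n (by omega : 0 ≠ e + 1), eVec_self, eVec_of_ne hij.ne, eVec_of_ne hij.ne', eVec_of_ne (by omega : 0 ≠ i),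
      eVec_of_ne (by omega : 0 ≠ j)]
    ring
  have hμ0 : 0 ≤ μ 0 - μ 1 + μ e := by
    simpa only [dot_simpleCoroot_self] using hμ e (by omega) le_rfl
  have h2 := h.sub_natCast_smul hrefl hρ 2 (by
    rw [hpair]
    push_cast
    linarith [hμ.apply_le_apply le_rfl hi (by omega), hμ.apply_le_apply (by omega) hje le_rfl])
  convert h2 using 1
  simp only [alphaIJ]
  push_cast
  module

theorem kplus_le_kplus_swap {e i j : ℕ} {Λ μ : ℕ → ℝ} (hμ : Dominant e μ) (hi : 1 ≤ i)
    (hij : i < j) (hje : j ≤ e) : kplus e Λ μ i j ≤ kplus e Λ μ j i := by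
  rw [kplus, kplus, if_pos hij, if_neg hij.not_gt]
  refine (csSup_le_csSup_add 0 (Set.union_nonempty.2 (Or.inl (Set.singleton_nonempty _)))
    (bddAbove_singleton.union <|
      (bddAbove_setOf_inSupp_add_alphaIJ hje (hij.le.trans hje) Λ μ).mono fun _ => And.right)
    ?_).trans_eq (add_zero _)
  rintro n (rfl | ⟨hn, hsupp⟩)
  · exact ⟨0, Or.inl rfl, by norm_num⟩
  rcases hn.eq_or_lt with rfl | hpos
  · exact ⟨0, Or.inl rfl, by norm_num⟩
  · exact ⟨n, Or.inr ⟨hpos, hsupp.add_alphaIJ_swap hμ hi hij hje⟩, by omega⟩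

theorem kplus_swap_le_kplus_add_two {e i j : ℕ} {Λ μ : ℕ → ℝ} (hμ : Dominant e μ) (hi : 1 ≤ i)
    (hij : i < j) (hje : j ≤ e) : kplus e Λ μ j i ≤ kplus e Λ μ i j + 2 := by
  rw [kplus, kplus, if_pos hij, if_neg hij.not_gt]
  refine csSup_le_csSup_add 2 (Set.union_nonempty.2 (Or.inl (Set.singleton_nonempty _)))
    (bddAbove_singleton.union <|
      (bddAbove_setOf_inSupp_add_alphaIJ (hij.le.trans hje) hje Λ μ).mono fun _ => And.right) ?_
  rintro n (rfl | ⟨hn, hsupp⟩)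
  · exact ⟨-1, Or.inl rfl, by norm_num⟩
  rcases le_or_gt n 1 with hn1 | hn2
  · exact ⟨-1, Or.inl rfl, by omega⟩
  · exact ⟨n - 2, Or.inr ⟨by omega, hsupp.add_alphaIJ_sub_two hμ hi hij hje⟩, by omega⟩

theorem kplus_kminus_bounds_general (e : ℕ) (Λ : ℕ → ℝ) (μ : ℕ → ℝ) (hμdom : Dominant e μ) :
    ∀ i j : ℕ, 1 ≤ i → i < j → j ≤ e →
      kplus e Λ μ i j ≤ kplus e Λ μ j i ∧
      kplus e Λ μ j i - 2 ≤ kplus e Λ μ i j := by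
  intro i j hi hij hje
  exact ⟨kplus_le_kplus_swap hμdom hi hij hje,
    sub_le_iff_le_add.2 (kplus_swap_le_kplus_add_two hμdom hi hij hje)⟩

/-- For `Λ` dominant of positive level and `μ ∈ supp(Λ)` dominant, the
statistics satisfy `k⁻_{ij} ≥ k⁺_{ij} ≥ k⁻_{ij} − 2` for all `1 ≤ i < j ≤ e`
(recall `k⁻_{ij} = k⁺_{ji}`). -/
theorem kplus_kminus_bounds (e : ℕ) (he : 2 ≤ e)
    (Λ : ℕ → ℝ) (hΛmem : ∑ r ∈ Finset.Icc 1 e, Λ r = 0)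
    (hΛdom : Dominant e Λ) (hΛlev : 0 < dot e deltaVee Λ)
    (μ : ℕ → ℝ) (hμ : InSupp e Λ μ) (hμdom : Dominant e μ) :
    ∀ i j : ℕ, 1 ≤ i → i < j → j ≤ e →
      kplus e Λ μ i j ≤ kplus e Λ μ j i ∧
      kplus e Λ μ j i - 2 ≤ kplus e Λ μ i j :=
  kplus_kminus_bounds_general e Λ μ hμdom

end SleHat
end

section
/- Let Λ be a dominant weight of positive level and μ ∈ supp(Λ) a dominant weight. For 1 ≤ i < j ≤ e, let k̄⁺_{ij} and k̄⁻_{ij} denote the statistics defined by the same formulas for the weight μ + δ (i.e. using N_{μ+δ} = {α a positive real root : μ + δ + α ∈ supp(Λ)} with the same defaults). Then k̄⁺_{ij} = max(k⁺_{ij} − 1, −1) and k̄⁻_{ij} = max(k⁻_{ij} − 1, 0). -/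
namespace SleHat

private lemma shift_sSup (S : ℤ → Prop) (b B : ℤ) (hB : ∀ n, S n → n ≤ B) :
    sSup ({b} ∪ {n : ℤ | b < n ∧ S (n + 1)}) =
      max (sSup ({b} ∪ {n : ℤ | b < n ∧ S n}) - 1) b := by
  set T : Set ℤ := {b} ∪ {n | b < n ∧ S n} with hT
  have hTne : T.Nonempty := ⟨b, Or.inl rfl⟩
  have hTbdd : BddAbove T := ⟨max b B, by
    rintro x (hx | ⟨_, hx⟩)
    · rw [Set.mem_singleton_iff] at hx; omega
    · exact le_trans (hB _ hx) (le_max_right _ _)⟩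
  set m := sSup T with hm
  have hmmem : m ∈ T := Int.csSup_mem hTne hTbdd
  have hbm : b ≤ m := le_csSup hTbdd (Or.inl rfl)
  set T' : Set ℤ := {b} ∪ {n | b < n ∧ S (n + 1)} with hT'
  have hT'ne : T'.Nonempty := ⟨b, Or.inl rfl⟩
  by_cases hcase : b + 2 ≤ m
  · have hmT : b < m ∧ S m := by
      rcases hmmem with h | h
      · rw [Set.mem_singleton_iff] at h; omega
      · exact h
    have hmem' : m - 1 ∈ T' := Or.inr ⟨by omega, by
      have h1 : m - 1 + 1 = m := by omega
      rw [h1]; exact hmT.2⟩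
    have hub : ∀ x ∈ T', x ≤ m - 1 := by
      rintro x (hx | ⟨hx1, hx2⟩)
      · rw [Set.mem_singleton_iff] at hx; omega
      · have : x + 1 ≤ m := le_csSup hTbdd (Or.inr ⟨by omega, hx2⟩)
        omega
    have h2 : sSup T' = m - 1 :=
      le_antisymm (csSup_le hT'ne hub) (le_csSup ⟨m - 1, hub⟩ hmem')
    rw [h2]; omega
  · have hub : ∀ x ∈ T', x ≤ b := by
      rintro x (hx | ⟨hx1, hx2⟩)
      · rw [Set.mem_singleton_iff] at hx; omega
      · have : x + 1 ≤ m := le_csSup hTbdd (Or.inr ⟨by omega, hx2⟩)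
        omega
    have h2 : sSup T' = b :=
      le_antisymm (csSup_le hT'ne hub) (le_csSup ⟨b, hub⟩ (Or.inl rfl))
    rw [h2]; omega

private lemma add_delta_alpha (μ : ℕ → ℝ) (e i j : ℕ) (n : ℤ) :
    (μ + nullRoot e) + alphaIJ e i j n = μ + alphaIJ e i j (n + 1) := by
  funext m
  simp only [alphaIJ, nullRoot, Pi.add_apply, Pi.sub_apply, Pi.neg_apply, Pi.smul_apply,
    smul_eq_mul]
  push_cast
  ring

private lemma simpleRoot_apply_top (e k : ℕ) (he : 2 ≤ e) (hk1 : 1 ≤ k) (hke : k ≤ e) :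
    simpleRoot e k (e + 1) = if k = e then -1 else 0 := by
  by_cases h : k = e
  · rw [if_pos h, simpleRoot, if_pos h]
    simp only [Pi.sub_apply, Pi.add_apply, Pi.neg_apply, eVec]
    rw [if_neg (by omega : ¬ e + 1 = 1), if_neg (by omega : ¬ e + 1 = e)]
    norm_num
  · rw [if_neg h, simpleRoot, if_neg h]
    simp only [Pi.sub_apply, eVec]
    rw [if_neg (by omega : ¬ e + 1 = k), if_neg (by omega : ¬ e + 1 = k + 1)]
    ring

private lemma bdd_lemma (e : ℕ) (he : 2 ≤ e) (Λ μ : ℕ → ℝ) (i j : ℕ)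
    (hie : i ≤ e) (hje : j ≤ e) :
    ∀ n : ℤ, InSupp e Λ (μ + alphaIJ e i j n) → n ≤ ⌈μ (e + 1) - Λ (e + 1)⌉ := by
  intro n hn
  obtain ⟨c, hc⟩ := hn [] (by simp)
  have hval := congrFun hc (e + 1)
  simp only [List.foldr_nil] at hval
  have ha : alphaIJ e i j n (e + 1) = -n := by
    simp only [alphaIJ, nullRoot, Pi.add_apply, Pi.sub_apply, Pi.neg_apply, Pi.smul_apply,
      smul_eq_mul, eVec]
    rw [if_neg (by omega : ¬ e + 1 = i), if_neg (by omega : ¬ e + 1 = j)]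
    norm_num
  have hL : (Λ - (μ + alphaIJ e i j n)) (e + 1) = Λ (e + 1) - μ (e + 1) + n := by
    simp only [Pi.sub_apply, Pi.add_apply, ha]
    ring
  have hR : (∑ k ∈ Finset.Icc 1 e, (c k : ℝ) • simpleRoot e k) (e + 1) = -(c e : ℝ) := by
    rw [Finset.sum_apply]
    have hterm : ∀ k ∈ Finset.Icc 1 e,
        ((c k : ℝ) • simpleRoot e k) (e + 1) = if k = e then -(c e : ℝ) else 0 := by
      intro k hk
      simp only [Finset.mem_Icc] at hk
      rw [Pi.smul_apply, smul_eq_mul, simpleRoot_apply_top e k he hk.1 hk.2]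
      by_cases h : k = e
      · rw [if_pos h, if_pos h, h]; ring
      · rw [if_neg h, if_neg h]; ring
    rw [Finset.sum_congr rfl hterm,
      Finset.sum_ite_eq' (Finset.Icc 1 e) e (fun _ => -(c e : ℝ))]
    rw [if_pos (Finset.mem_Icc.mpr ⟨by omega, le_refl e⟩)]
  rw [hL, hR] at hval
  have hce : (0 : ℝ) ≤ (c e : ℝ) := Nat.cast_nonneg _
  have hreal : (n : ℝ) ≤ μ (e + 1) - Λ (e + 1) := by linarith
  have := Int.le_ceil (μ (e + 1) - Λ (e + 1))
  exact_mod_cast hreal.trans this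



/-- For `Λ` dominant of positive level and `μ ∈ supp(Λ)` dominant, the
statistics `k̄⁺_{ij}, k̄⁻_{ij}` of the weight `μ + δ` satisfy
`k̄⁺_{ij} = max(k⁺_{ij} − 1, −1)` and `k̄⁻_{ij} = max(k⁻_{ij} − 1, 0)` for `1 ≤ i < j ≤ e`
(recall `k⁻_{ij} = k⁺_{ji}`). -/
theorem kplus_add_delta (e : ℕ) (he : 2 ≤ e)
    (Λ : ℕ → ℝ) (hΛmem : ∑ r ∈ Finset.Icc 1 e, Λ r = 0)
    (hΛdom : Dominant e Λ) (hΛlev : 0 < dot e deltaVee Λ)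
    (μ : ℕ → ℝ) (hμ : InSupp e Λ μ) (hμdom : Dominant e μ) :
    ∀ i j : ℕ, 1 ≤ i → i < j → j ≤ e →
      kplus e Λ (μ + nullRoot e) i j = max (kplus e Λ μ i j - 1) (-1) ∧
      kplus e Λ (μ + nullRoot e) j i = max (kplus e Λ μ j i - 1) 0 := by
  intro i j hi hij hje
  have hie : i ≤ e := by omega
  have hj1 : 1 ≤ j := by omega
  constructor
  · rw [kplus, kplus, if_pos hij, if_pos hij]
    have hset : {n : ℤ | 0 ≤ n ∧ InSupp e Λ ((μ + nullRoot e) + alphaIJ e i j n)} =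
        {n : ℤ | (-1 : ℤ) < n ∧ InSupp e Λ (μ + alphaIJ e i j (n + 1))} := by
      ext n
      rw [Set.mem_setOf_eq, Set.mem_setOf_eq, add_delta_alpha]
      exact ⟨fun ⟨h1, h2⟩ => ⟨by omega, h2⟩, fun ⟨h1, h2⟩ => ⟨by omega, h2⟩⟩
    have hset2 : {n : ℤ | 0 ≤ n ∧ InSupp e Λ (μ + alphaIJ e i j n)} =
        {n : ℤ | (-1 : ℤ) < n ∧ InSupp e Λ (μ + alphaIJ e i j n)} := by
      ext n
      rw [Set.mem_setOf_eq, Set.mem_setOf_eq]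
      exact ⟨fun ⟨h1, h2⟩ => ⟨by omega, h2⟩, fun ⟨h1, h2⟩ => ⟨by omega, h2⟩⟩
    rw [hset, hset2]
    exact shift_sSup (fun n => InSupp e Λ (μ + alphaIJ e i j n)) (-1) _
      (bdd_lemma e he Λ μ i j hie hje)
  · rw [kplus, kplus, if_neg (by omega : ¬ j < i), if_neg (by omega : ¬ j < i)]
    have hset : {n : ℤ | 0 < n ∧ InSupp e Λ ((μ + nullRoot e) + alphaIJ e j i n)} =
        {n : ℤ | (0 : ℤ) < n ∧ InSupp e Λ (μ + alphaIJ e j i (n + 1))} := by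
      ext n
      rw [Set.mem_setOf_eq, Set.mem_setOf_eq, add_delta_alpha]
    rw [hset]
    exact shift_sSup (fun n => InSupp e Λ (μ + alphaIJ e j i n)) 0 _
      (bdd_lemma e he Λ μ j i hje hie)


end SleHat
end
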